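/- arXiv:2006.14581 — 4 statements merged into one kernel-verified Lean document; each statement's English description precedes it below -/
import Mathlib

section
/- Optimal recovery of the function from interval means on H^ω: Let ω be a modulus of continuity, E a nontrivial real Banach space, a < b, n ≥ 1, h > 0 with 2nh < b − a. Call knots t = (t₁,…,t_n) admissible if a ≤ t₁ − h, t_i + h < t_{i+1} − h for i = 1,…,n−1, and t_n + h ≤ b; for admissible t let I_t(f) = ( (1/(2h))∫_{t₁−h}^{t₁+h} f(u) du, …, (1/(2h))∫_{t_n−h}^{t_n+h} f(u) du ) ∈ Eⁿ. Then the infimum, over all admissible knots t and all maps Φ: Eⁿ → ([a,b] → E), of sup_{f ∈ H^ω([a,b],E)} sup_{u∈[a,b]} ‖f(u) − Φ(I_t(f))(u)‖ equals (1/(2h))·∫_{(b−a)/(2n)−h}^{(b−a)/(2n)+h} ω(u) du. The infimum is attained at the uniform knots t*_k = a + (2k−1)(b−a)/(2n), k = 1,…,n, together with the method Φ* given by Φ*(y₁,…,y_n)(u) = y_k for u ∈ [τ_k, τ_{k+1}], where τ₁ = a, τ_k = (t*_{k−1} + t*_k)/2 for k = 2,…,n, and τ_{n+1} = b. -/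
open MeasureTheory Set

/-!
Every `u ∈ [a, b]` lies within `δ = (b - a)/(2n)` of a uniform knot `T`, and
`‖f u - (1/2h)∫_{T-h}^{T+h} f‖ ≤ (1/2h)∫_{T-h}^{T+h} ω|v - u| dv`; this window integral of `ω|·|`
grows with the distance `|T - u|`, which gives the upper bound.

For the lower bound, reflect `t₁` in `a` and `tₙ` in `b`; weighting the two boundary gaps by `1/2`,
the gaps add up to `b - a`, so one of them has half-width `D ≥ δ`. Around its midpoint `μ` we build
a real `F` with modulus `ω`, vanishing means over all windows `[tᵢ - h, tᵢ + h]`, and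
`F μ = (1/2h)∫_{D-h}^{D+h} ω ≥ (1/2h)∫_{δ-h}^{δ+h} ω`. The two functions `±F e` carry the same
information, so every method errs by at least `F μ` at `μ`. On the gap `F = C - ω|u - μ|`, which
makes the means over the two adjacent windows vanish; elsewhere `F = C - ω(D + h) + ω(ρ u)` for a
`1`-Lipschitz profile `ρ ≥ 0` built window by window away from the gap, the mean over each window
being adjusted by the intermediate value theorem.
-/

/-- A modulus of continuity: `ω 0 = 0`, continuous, non-decreasing and subadditive on `[0, ∞)`. -/
def IsModulus (ω : ℝ → ℝ) : Prop :=
  ω 0 = 0 ∧ ContinuousOn ω (Set.Ici 0) ∧ MonotoneOn ω (Set.Ici 0) ∧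
    ∀ s t : ℝ, 0 ≤ s → 0 ≤ t → ω (s + t) ≤ ω s + ω t

/-- The class `H^ω([a,b], E)`. -/
def HHolder {E : Type*} [NormedAddCommGroup E] (ω : ℝ → ℝ) (a b : ℝ) (f : ℝ → E) : Prop :=
  ∀ s ∈ Set.Icc a b, ∀ t ∈ Set.Icc a b, ‖f t - f s‖ ≤ ω |t - s|

/-- Admissible knots `t₁, …, t_n`: `a ≤ t₁ − h`, `tᵢ + h < t_{i+1} − h`, `t_n + h ≤ b`. -/
def AdmKnots (a b h : ℝ) (n : ℕ) (t : ℕ → ℝ) : Prop :=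
  a ≤ t 1 - h ∧ (∀ i, 1 ≤ i → i < n → t i + h < t (i + 1) - h) ∧ t n + h ≤ b

/-- The information operator: mean values of `f` over the intervals `[tᵢ − h, tᵢ + h]`. -/
noncomputable def meanInfo {E : Type*} [NormedAddCommGroup E] [NormedSpace ℝ E]
    (h : ℝ) (n : ℕ) (t : ℕ → ℝ) (f : ℝ → E) : Fin n → E :=
  fun i => (1 / (2 * h)) • ∫ u in (t ((i : ℕ) + 1) - h)..(t ((i : ℕ) + 1) + h), f u

/-- The uniform knots `t*_k = a + (2k − 1)(b − a)/(2n)`, `k = 1, …, n`. -/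
noncomputable def uniformKnots (a b : ℝ) (n : ℕ) : ℕ → ℝ :=
  fun k => a + (2 * (k : ℝ) - 1) * (b - a) / (2 * (n : ℝ))

/-- The optimal method: `Φ*(y₁,…,y_n)(u) = y_k` for `u ∈ [τ_k, τ_{k+1}]`, where
`τ_k = a + (k−1)(b−a)/n` are the midpoints between consecutive uniform knots
(`τ₁ = a`, `τ_{n+1} = b`). -/
noncomputable def stepMethod {E : Type*} [NormedAddCommGroup E] [NormedSpace ℝ E]
    (a b : ℝ) (n : ℕ) (y : Fin n → E) (u : ℝ) : E :=
  if hn : 0 < n then y ⟨min (n - 1) ⌊(u - a) * n / (b - a)⌋₊, by omega⟩ else 0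

noncomputable def modulusExt (ω : ℝ → ℝ) (s : ℝ) : ℝ := ω (max s 0)

lemma modulusExt_of_nonneg {ω : ℝ → ℝ} {s : ℝ} (hs : 0 ≤ s) : modulusExt ω s = ω s := by
  rw [modulusExt, max_eq_left hs]

lemma modulusExt_max_zero {ω : ℝ → ℝ} (s : ℝ) : modulusExt ω (max s 0) = modulusExt ω s := by
  rw [modulusExt, modulusExt, max_eq_left (le_max_right s 0)]

namespace IsModulus

variable {ω : ℝ → ℝ} (hω : IsModulus ω)
include hω

lemma modulusExt_of_nonpos {s : ℝ} (hs : s ≤ 0) : modulusExt ω s = 0 := by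
  rw [modulusExt, max_eq_right hs, hω.1]

lemma monotone_modulusExt : Monotone (modulusExt ω) := fun _ _ hxy =>
  hω.2.2.1 (mem_Ici.2 (le_max_right _ _)) (mem_Ici.2 (le_max_right _ _)) (max_le_max_right 0 hxy)

lemma modulusExt_nonneg (s : ℝ) : 0 ≤ modulusExt ω s :=
  hω.1 ▸ hω.2.2.1 (mem_Ici.2 le_rfl) (mem_Ici.2 (le_max_right s 0)) (le_max_right s 0)

lemma modulusExt_add_le (x y : ℝ) : modulusExt ω (x + y) ≤ modulusExt ω x + modulusExt ω y := by
  calc modulusExt ω (x + y) ≤ ω (max x 0 + max y 0) :=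
        hω.2.2.1 (mem_Ici.2 (le_max_right _ _))
          (mem_Ici.2 (add_nonneg (le_max_right _ _) (le_max_right _ _)))
          (max_le (add_le_add (le_max_left _ _) (le_max_left _ _))
            (add_nonneg (le_max_right _ _) (le_max_right _ _)))
    _ ≤ _ := hω.2.2.2 _ _ (le_max_right _ _) (le_max_right _ _)

lemma abs_sub_modulusExt_le (x y : ℝ) :
    |modulusExt ω x - modulusExt ω y| ≤ modulusExt ω |x - y| := by
  have hx := hω.modulusExt_add_le y (x - y)
  have hy := hω.modulusExt_add_le x (y - x)
  rw [add_sub_cancel] at hx hy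
  have := hω.monotone_modulusExt (le_abs_self (x - y))
  have := hω.monotone_modulusExt (neg_le_abs (x - y))
  rw [abs_sub_le_iff, neg_sub] at *
  constructor <;> linarith

lemma continuous_modulusExt : Continuous (modulusExt ω) :=
  hω.2.1.comp_continuous (continuous_id.max continuous_const) fun _ => mem_Ici.2 (le_max_right _ _)

lemma integral_modulusExt_comp_mono {f g : ℝ → ℝ} (hf : Continuous f) (hg : Continuous g)
    {x y : ℝ} (hxy : x ≤ y) (hfg : ∀ u ∈ Icc x y, f u ≤ g u) :
    ∫ u in x..y, modulusExt ω (f u) ≤ ∫ u in x..y, modulusExt ω (g u) :=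
  intervalIntegral.integral_mono_on hxy
    ((hω.continuous_modulusExt.comp hf).intervalIntegrable _ _)
    ((hω.continuous_modulusExt.comp hg).intervalIntegrable _ _)
    fun u hu => hω.monotone_modulusExt (hfg u hu)

lemma integral_modulusExt_sub_mono {L : ℝ} (hL : 0 ≤ L) :
    Monotone fun r => ∫ s in (0 : ℝ)..L, modulusExt ω (r - s) := fun _ _ hr =>
  hω.integral_modulusExt_comp_mono (by fun_prop) (by fun_prop) hL
    fun _ _ => sub_le_sub_right hr _

lemma integral_modulusExt_le_mul {x y : ℝ} (hxy : x ≤ y) :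
    ∫ s in x..y, modulusExt ω s ≤ (y - x) * modulusExt ω y := by
  simpa using intervalIntegral.integral_mono_on hxy
    (hω.continuous_modulusExt.intervalIntegrable x y) (intervalIntegrable_const (μ := volume))
    fun s hs => hω.monotone_modulusExt hs.2

lemma mul_modulusExt_le_integral_add {L : ℝ} (hL : 0 ≤ L) (r : ℝ) :
    L * modulusExt ω r ≤
      (∫ s in (r - L)..r, modulusExt ω s) + ∫ s in (0 : ℝ)..L, modulusExt ω s := by
  have hW := hω.continuous_modulusExt
  have hr : Continuous fun s => modulusExt ω (r - s) := by fun_prop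
  calc L * modulusExt ω r = ∫ _ in (0 : ℝ)..L, modulusExt ω r := by simp
    _ ≤ ∫ s in (0 : ℝ)..L, (modulusExt ω (r - s) + modulusExt ω s) :=
        intervalIntegral.integral_mono_on hL intervalIntegrable_const
          ((hr.add hW).intervalIntegrable _ _)
          fun s _ => by simpa using hω.modulusExt_add_le (r - s) s
    _ = _ := by
        rw [intervalIntegral.integral_add (hr.intervalIntegrable _ _) (hW.intervalIntegrable _ _),
          intervalIntegral.integral_comp_sub_left (modulusExt ω)]
        simp

end IsModulus

section AbsWindow

variable {ω : ℝ → ℝ} {h : ℝ}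

lemma integral_modulusExt_of_nonneg {x y : ℝ} (hx : 0 ≤ x) (hxy : x ≤ y) :
    ∫ s in x..y, modulusExt ω s = ∫ s in x..y, ω s :=
  intervalIntegral.integral_congr fun _ hs =>
    modulusExt_of_nonneg (hx.trans (uIcc_of_le hxy ▸ hs).1)

lemma integral_modulusExt_abs_window_of_le (hh : 0 ≤ h) {d : ℝ} (hd : h ≤ d) :
    ∫ s in (d - h)..(d + h), modulusExt ω |s| = ∫ s in (d - h)..(d + h), ω s := by
  rw [← integral_modulusExt_of_nonneg (ω := ω) (by linarith) (by linarith)]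
  refine intervalIntegral.integral_congr fun s hs => ?_
  rw [uIcc_of_le (by linarith)] at hs
  simp only [abs_of_nonneg (by linarith [hs.1] : 0 ≤ s)]

lemma integral_modulusExt_abs_window_abs (d : ℝ) :
    ∫ s in (|d| - h)..(|d| + h), modulusExt ω |s| = ∫ s in (d - h)..(d + h), modulusExt ω |s| := by
  rcases abs_cases d with ⟨hd, -⟩ | ⟨hd, -⟩
  · rw [hd]
  · have := intervalIntegral.integral_comp_neg (a := d - h) (b := d + h)
      (fun s => modulusExt ω |s|)
    simp only [abs_neg] at this
    rw [hd, this]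
    congr 1 <;> ring

lemma IsModulus.integral_modulusExt_abs_window_mono (hω : IsModulus ω) (hh : 0 ≤ h) {d d' : ℝ}
    (hd : 0 ≤ d) (hdd' : d ≤ d') :
    ∫ s in (d - h)..(d + h), modulusExt ω |s| ≤ ∫ s in (d' - h)..(d' + h), modulusExt ω |s| := by
  have hc (x y : ℝ) : IntervalIntegrable (fun s => modulusExt ω |s|) volume x y :=
    (hω.continuous_modulusExt.comp continuous_abs).intervalIntegrable x y
  have hshift : ∫ s in (d - h)..(d' - h), modulusExt ω |s| ≤
      ∫ s in (d + h)..(d' + h), modulusExt ω |s| := by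
    have hsub : ∫ s in (d + h)..(d' + h), modulusExt ω |s - 2 * h| =
        ∫ s in (d - h)..(d' - h), modulusExt ω |s| := by
      rw [intervalIntegral.integral_comp_sub_right (fun s => modulusExt ω |s|)]
      congr 1 <;> ring
    rw [← hsub]
    refine hω.integral_modulusExt_comp_mono (f := fun s => |s - 2 * h|) (g := fun s => |s|)
      (by fun_prop) (by fun_prop) (by linarith) fun s hs => ?_
    rw [abs_of_nonneg (by linarith [hs.1] : 0 ≤ s)]
    exact abs_le.2 ⟨by linarith [hs.1], by linarith⟩
  have := intervalIntegral.integral_add_adjacent_intervals (hc (d - h) (d + h)) (hc _ (d' + h))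
  have := intervalIntegral.integral_add_adjacent_intervals (hc (d - h) (d' - h)) (hc _ (d' + h))
  linarith

lemma integral_modulusExt_abs_sub (hh : 0 ≤ h) {μ x D : ℝ} (hD : h ≤ D)
    (hx : |x - μ| = D) :
    ∫ u in (x - h)..(x + h), modulusExt ω |u - μ| = ∫ s in (D - h)..(D + h), ω s := by
  rw [intervalIntegral.integral_comp_sub_right (fun s => modulusExt ω |s|), sub_right_comm,
    add_sub_right_comm, ← integral_modulusExt_abs_window_abs, hx,
    integral_modulusExt_abs_window_of_le hh hD]

lemma IsModulus.integral_modulusExt_abs_window_le (hω : IsModulus ω) (hh : 0 ≤ h) {d d' : ℝ}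
    (hdd' : |d| ≤ d') (hd' : h ≤ d') :
    ∫ s in (d - h)..(d + h), modulusExt ω |s| ≤ ∫ s in (d' - h)..(d' + h), ω s := by
  rw [← integral_modulusExt_abs_window_abs, ← integral_modulusExt_abs_window_of_le hh hd']
  exact hω.integral_modulusExt_abs_window_mono hh (abs_nonneg d) hdd'

end AbsWindow

lemma IsModulus.continuousOn_of_hHolder {E : Type*} [NormedAddCommGroup E] {ω : ℝ → ℝ}
    (hω : IsModulus ω) {a b : ℝ} {f : ℝ → E} (hf : HHolder ω a b f) : ContinuousOn f (Icc a b) := by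
  intro x hx
  have hlim : Filter.Tendsto (fun y => modulusExt ω |y - x|) (nhdsWithin x (Icc a b)) (nhds 0) := by
    have hW := hω.continuous_modulusExt
    have := (by fun_prop : Continuous fun y => modulusExt ω |y - x|).tendsto x
    simp only [sub_self, abs_zero, hω.modulusExt_of_nonpos le_rfl] at this
    exact this.mono_left nhdsWithin_le_nhds
  refine tendsto_iff_norm_sub_tendsto_zero.2 (squeeze_zero' (Filter.Eventually.of_forall
    fun _ => norm_nonneg _) ?_ hlim)
  filter_upwards [self_mem_nhdsWithin] with y hy
  rw [modulusExt_of_nonneg (abs_nonneg _)]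
  exact hf x hx y hy

lemma IsModulus.norm_sub_average_le {E : Type*} [NormedAddCommGroup E] [NormedSpace ℝ E]
    [CompleteSpace E] {ω : ℝ → ℝ} (hω : IsModulus ω) {a b h c u : ℝ} {f : ℝ → E}
    (hf : HHolder ω a b f) (hh : 0 < h) (hc : Icc (c - h) (c + h) ⊆ Icc a b) (hu : u ∈ Icc a b) :
    ‖f u - (1 / (2 * h)) • ∫ v in (c - h)..(c + h), f v‖ ≤
      (1 / (2 * h)) * ∫ v in (c - h)..(c + h), modulusExt ω |v - u| := by
  have hint : IntervalIntegrable f volume (c - h) (c + h) :=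
    ((hω.continuousOn_of_hHolder hf).mono
      (uIcc_of_le (by linarith : c - h ≤ c + h) ▸ hc)).intervalIntegrable
  have hmean : f u - (1 / (2 * h)) • ∫ v in (c - h)..(c + h), f v =
      (1 / (2 * h)) • ∫ v in (c - h)..(c + h), (f u - f v) := by
    rw [intervalIntegral.integral_sub intervalIntegrable_const hint,
      intervalIntegral.integral_const, smul_sub, smul_smul,
      show 1 / (2 * h) * (c + h - (c - h)) = 1 by field_simp; ring, one_smul]
  rw [hmean, norm_smul, Real.norm_of_nonneg (by positivity)]
  gcongr
  refine (intervalIntegral.norm_integral_le_integral_norm (by linarith)).trans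
    (intervalIntegral.integral_mono_on (by linarith) (intervalIntegrable_const.sub hint).norm
      ((hω.continuous_modulusExt.comp (by fun_prop)).intervalIntegrable _ _) fun v hv => ?_)
  rw [modulusExt_of_nonneg (abs_nonneg _), abs_sub_comm]
  exact hf v (hc hv) u hu

section uniformKnots

variable {a b h : ℝ} {n : ℕ}

lemma uniformKnots_eq (k : ℕ) :
    uniformKnots a b n k = a + (2 * k - 1) * ((b - a) / (2 * n)) := by
  rw [uniformKnots, mul_div_assoc]

lemma admKnots_uniformKnots (hn : 0 < n) (hδh : h < (b - a) / (2 * n)) :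
    AdmKnots a b h n (uniformKnots a b n) := by
  have hX : 2 * n * ((b - a) / (2 * n)) = b - a := by field_simp
  refine ⟨?_, fun i _ _ => ?_, ?_⟩ <;> simp only [uniformKnots_eq] <;> push_cast <;> linarith

lemma Icc_uniformKnots_subset (hn : 0 < n) (hh : 0 ≤ h) (hδh : h ≤ (b - a) / (2 * n)) {k : ℕ}
    (hk : k ∈ Finset.Icc 1 n) :
    Icc (uniformKnots a b n k - h) (uniformKnots a b n k + h) ⊆ Icc a b := by
  rw [Finset.mem_Icc] at hk
  have hk1 : (1 : ℝ) ≤ k := by exact_mod_cast hk.1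
  have hkn : (k : ℝ) ≤ n := by exact_mod_cast hk.2
  have hX : 2 * n * ((b - a) / (2 * n)) = b - a := by field_simp
  have hX0 : 0 ≤ (b - a) / (2 * n) := hh.trans hδh
  apply Icc_subset_Icc <;> rw [uniformKnots_eq] <;> nlinarith

lemma abs_sub_uniformKnots_le (hab : a < b) (hn : 0 < n) {u : ℝ} (hu : u ∈ Icc a b) :
    |u - uniformKnots a b n (min (n - 1) ⌊(u - a) * n / (b - a)⌋₊ + 1)| ≤ (b - a) / (2 * n) := by
  set x := (u - a) * n / (b - a) with hx
  set i := min (n - 1) ⌊x⌋₊ with hi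
  have hx0 : 0 ≤ x := div_nonneg (mul_nonneg (by linarith [hu.1]) (Nat.cast_nonneg n)) (by linarith)
  have hxn : x ≤ n := by
    rw [hx, div_le_iff₀ (by linarith)]
    nlinarith [hu.2, (Nat.cast_nonneg n : (0 : ℝ) ≤ n)]
  have hix : (i : ℝ) ≤ x := (Nat.cast_le.2 (min_le_right _ _)).trans (Nat.floor_le hx0)
  have hxi : x ≤ i + 1 := by
    rcases le_total ⌊x⌋₊ (n - 1) with h | h
    · rw [hi, min_eq_right h]
      exact (Nat.lt_floor_add_one x).le
    · rw [hi, min_eq_left h, Nat.cast_pred hn]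
      linarith
  have hux : u = a + 2 * x * ((b - a) / (2 * n)) := by
    have hba : b - a ≠ 0 := (sub_pos.2 hab).ne'
    have hn0 : (n : ℝ) ≠ 0 := by positivity
    rw [hx]
    field_simp
    ring
  rw [uniformKnots_eq, hux, abs_le]
  push_cast
  have hX0 : 0 < (b - a) / (2 * n) := by positivity
  constructor <;> nlinarith

end uniformKnots

lemma IsModulus.norm_sub_stepMethod_le {E : Type*} [NormedAddCommGroup E] [NormedSpace ℝ E]
    [CompleteSpace E] {ω : ℝ → ℝ} (hω : IsModulus ω) {a b h : ℝ} {n : ℕ} (hab : a < b)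
    (hn : 0 < n) (hh : 0 < h) (hδh : h ≤ (b - a) / (2 * n)) {f : ℝ → E} (hf : HHolder ω a b f)
    {u : ℝ} (hu : u ∈ Icc a b) :
    ‖f u - stepMethod a b n (meanInfo h n (uniformKnots a b n) f) u‖ ≤
      (1 / (2 * h)) * ∫ s in ((b - a) / (2 * n) - h)..((b - a) / (2 * n) + h), ω s := by
  simp only [stepMethod, dif_pos hn, meanInfo]
  refine (hω.norm_sub_average_le hf hh (Icc_uniformKnots_subset hn hh.le hδh
    (Finset.mem_Icc.2 ⟨by omega, by omega⟩)) hu).trans ?_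
  gcongr
  rw [intervalIntegral.integral_comp_sub_right (fun s => modulusExt ω |s|), sub_right_comm,
    add_sub_right_comm]
  exact hω.integral_modulusExt_abs_window_le hh.le
    (by rw [abs_sub_comm]; exact abs_sub_uniformKnots_le hab hn hu) hδh

def HasModulus (ω F : ℝ → ℝ) : Prop := ∀ x y, |F x - F y| ≤ ω |x - y|

namespace HasModulus

variable {ω F G : ℝ → ℝ}

lemma max (hF : HasModulus ω F) (hG : HasModulus ω G) : HasModulus ω fun u => max (F u) (G u) :=
  fun x y => (abs_max_sub_max_le_max _ _ _ _).trans (max_le (hF x y) (hG x y))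

lemma const_add (hF : HasModulus ω F) (c : ℝ) : HasModulus ω fun u => c + F u := fun x y => by
  simpa only [add_sub_add_left_eq_sub] using hF x y

lemma const_sub (hF : HasModulus ω F) (c : ℝ) : HasModulus ω fun u => c - F u := fun x y => by
  simpa only [sub_sub_sub_cancel_left, abs_sub_comm (F y)] using hF x y

lemma hHolder_smul {E : Type*} [NormedAddCommGroup E] [NormedSpace ℝ E] (hF : HasModulus ω F)
    {e : E} (he : ‖e‖ = 1) (a b : ℝ) : HHolder ω a b fun u => F u • e := fun s _ t _ => by
  simpa only [← sub_smul, norm_smul, he, mul_one, Real.norm_eq_abs] using hF t s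

end HasModulus

lemma IsModulus.hasModulus_modulusExt_comp {ω ρ : ℝ → ℝ} (hω : IsModulus ω)
    (hρ : LipschitzWith 1 ρ) : HasModulus ω fun u => modulusExt ω (ρ u) := fun x y =>
  calc _ ≤ modulusExt ω |ρ x - ρ y| := hω.abs_sub_modulusExt_le _ _
    _ ≤ modulusExt ω |x - y| :=
      hω.monotone_modulusExt (by simpa [Real.dist_eq] using hρ.dist_le_mul x y)
    _ = ω |x - y| := modulusExt_of_nonneg (abs_nonneg _)

def descendAfter (ρ : ℝ → ℝ) (P u : ℝ) : ℝ := max (min (ρ u) (ρ P + P - u)) 0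

section descendAfter

variable {ρ : ℝ → ℝ} {P u : ℝ}

lemma LipschitzWith.descendAfter (hρ : LipschitzWith 1 ρ) (P : ℝ) :
    LipschitzWith 1 (descendAfter ρ P) := by
  unfold _root_.descendAfter
  simpa only [max_self, IsometryEquiv.subLeft_apply] using
    (hρ.min (IsometryEquiv.subLeft (ρ P + P)).isometry.lipschitz).max_const 0

lemma descendAfter_nonneg : 0 ≤ descendAfter ρ P u := le_max_right _ _

lemma descendAfter_le : descendAfter ρ P u ≤ max (ρ P + P - u) 0 :=
  max_le_max_right 0 (min_le_right _ _)

lemma descendAfter_eq_of_le (hρ : LipschitzWith 1 ρ) (hρ0 : 0 ≤ ρ u) (hu : u ≤ P) :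
    descendAfter ρ P u = ρ u := by
  have : ρ u - ρ P ≤ P - u := by
    simpa [Real.dist_eq, abs_of_nonpos (sub_nonpos.2 hu)] using
      (le_abs_self _).trans (hρ.dist_le_mul u P)
  rw [descendAfter, min_eq_left (by linarith), max_eq_left hρ0]

end descendAfter

section Profiles

variable {ω : ℝ → ℝ} {h γ : ℝ}

lemma IsModulus.exists_ramp_mean_eq (hω : IsModulus ω) (hh : 0 < h)
    (hγ : 2 * h * γ ≤ ∫ s in (0 : ℝ)..2 * h, modulusExt ω s) {D : ℝ → ℝ} (hD : Continuous D)
    (hD0 : ∀ u, 0 ≤ D u) {c : ℝ} (hDc : ∫ u in (c - h)..(c + h), modulusExt ω (D u) ≤ 2 * h * γ) :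
    ∃ σ ∈ Icc (c - h) (c + h),
      ∫ u in (c - h)..(c + h), modulusExt ω (max (D u) (u - σ)) = 2 * h * γ := by
  have hW := hω.continuous_modulusExt
  refine intermediate_value_Icc' (by linarith) (Continuous.continuousOn ?_) ⟨?_, ?_⟩
  · exact intervalIntegral.continuous_parametric_intervalIntegral_of_continuous' (by fun_prop) _ _
  · refine le_of_eq_of_le (intervalIntegral.integral_congr fun u hu => ?_) hDc
    rw [uIcc_of_le (by linarith)] at hu
    simp only [max_eq_left ((sub_nonpos.2 hu.2).trans (hD0 u))]
  · calc 2 * h * γ ≤ ∫ s in (0 : ℝ)..2 * h, modulusExt ω s := hγ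
      _ = ∫ u in (c - h)..(c + h), modulusExt ω (u - (c - h)) := by
        rw [intervalIntegral.integral_comp_sub_right]; ring_nf
      _ ≤ _ := hω.integral_modulusExt_comp_mono (by fun_prop) (by fun_prop) (by linarith)
        fun u _ => le_max_right _ _

/-- The hypothesis `hP` says that a profile descending with slope `1` from the value `ρ P` over a
window of length `2h` has mean at most `γ` there: this is what lets the intermediate value theorem
fit the next window, and the conclusion restores it at `c + h`. -/
lemma IsModulus.exists_profile_step (hω : IsModulus ω) (hh : 0 < h)
    (hγ : 2 * h * γ ≤ ∫ s in (0 : ℝ)..2 * h, modulusExt ω s) {ρ : ℝ → ℝ}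
    (hρ : LipschitzWith 1 ρ) (hρ0 : ∀ u, 0 ≤ ρ u) {P c : ℝ} (hPc : P + h ≤ c)
    (hP : ∫ s in (0 : ℝ)..2 * h, modulusExt ω (ρ P - s) ≤ 2 * h * γ) :
    ∃ ρ' : ℝ → ℝ, LipschitzWith 1 ρ' ∧ (∀ u, 0 ≤ ρ' u) ∧ (∀ u ≤ P, ρ' u = ρ u) ∧
      ∫ u in (c - h)..(c + h), modulusExt ω (ρ' u) = 2 * h * γ ∧
      ∫ s in (0 : ℝ)..2 * h, modulusExt ω (ρ' (c + h) - s) ≤ 2 * h * γ := by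
  have hD := hρ.descendAfter P
  have hDc : ∫ u in (c - h)..(c + h), modulusExt ω (descendAfter ρ P u) ≤ 2 * h * γ :=
    calc _ ≤ ∫ u in (c - h)..(c + h), modulusExt ω (max (ρ P + P - u) 0) :=
          hω.integral_modulusExt_comp_mono hD.continuous (by fun_prop) (by linarith)
            fun _ _ => descendAfter_le
      _ = ∫ s in (0 : ℝ)..2 * h, modulusExt ω (ρ P + P - (c - h) - s) := by
          simp only [modulusExt_max_zero, intervalIntegral.integral_comp_sub_left (modulusExt ω)]
          congr 1 <;> ring
      _ ≤ _ := (hω.integral_modulusExt_sub_mono (by linarith) (by linarith)).trans hP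
  obtain ⟨σ, hσ, hσmean⟩ :=
    hω.exists_ramp_mean_eq hh hγ hD.continuous (fun _ => descendAfter_nonneg) hDc
  refine ⟨fun u => max (descendAfter ρ P u) (u - σ),
    by simpa using hD.max (IsometryEquiv.subRight σ).isometry.lipschitz,
    fun u => descendAfter_nonneg.trans (le_max_left _ _), fun u hu => ?_, hσmean, ?_⟩
  · dsimp only
    rw [descendAfter_eq_of_le hρ (hρ0 u) hu, max_eq_left (by linarith [hσ.1, hρ0 u])]
  · have hrise : ∫ s in (0 : ℝ)..2 * h, modulusExt ω (c + h - σ - s) ≤ 2 * h * γ :=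
      calc _ = ∫ u in (c - h)..(c + h), modulusExt ω (u - σ) := by
            simp only [intervalIntegral.integral_comp_sub_left (modulusExt ω),
              intervalIntegral.integral_comp_sub_right (modulusExt ω)]
            congr 1 <;> ring
        _ ≤ _ := hω.integral_modulusExt_comp_mono (by fun_prop)
            (hD.continuous.max (by fun_prop)) (by linarith) fun u _ => le_max_right _ _
        _ = 2 * h * γ := hσmean
    dsimp only
    rcases le_total (descendAfter ρ P (c + h)) (c + h - σ) with hle | hle
    · rwa [max_eq_right hle]
    · rw [max_eq_left hle]
      refine (hω.integral_modulusExt_sub_mono (by linarith) ?_).trans hP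
      exact descendAfter_le.trans (max_le (by linarith) (hρ0 P))

lemma IsModulus.exists_profile_of_pairwise (hω : IsModulus ω) (hh : 0 < h)
    (hγ : 2 * h * γ ≤ ∫ s in (0 : ℝ)..2 * h, modulusExt ω s) (K : Finset ℝ)
    (hK : (K : Set ℝ).Pairwise fun x y => 2 * h ≤ |x - y|) {ρ : ℝ → ℝ}
    (hρ : LipschitzWith 1 ρ) (hρ0 : ∀ u, 0 ≤ ρ u) {P : ℝ} (hPK : ∀ x ∈ K, P + h ≤ x)
    (hP : ∫ s in (0 : ℝ)..2 * h, modulusExt ω (ρ P - s) ≤ 2 * h * γ) :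
    ∃ ρ' : ℝ → ℝ, LipschitzWith 1 ρ' ∧ (∀ u, 0 ≤ ρ' u) ∧ (∀ u ≤ P, ρ' u = ρ u) ∧
      ∀ x ∈ K, ∫ u in (x - h)..(x + h), modulusExt ω (ρ' u) = 2 * h * γ := by
  induction K using Finset.induction_on_min generalizing ρ P with
  | empty => exact ⟨ρ, hρ, hρ0, fun _ _ => rfl, by simp⟩
  | insert c K hcK ih =>
    have hPc := hPK c (Finset.mem_insert_self c K)
    obtain ⟨ρ₁, hρ₁, hρ₁0, hagree₁, hmean₁, hend₁⟩ := hω.exists_profile_step hh hγ hρ hρ0 hPc hP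
    have hcK' : ∀ x ∈ K, c + h + h ≤ x := fun x hx => by
      have : 2 * h ≤ |c - x| := hK (by simp) (by simp [hx]) (hcK x hx).ne
      rw [abs_of_neg (sub_neg.2 (hcK x hx))] at this
      linarith
    obtain ⟨ρ', hρ', hρ'0, hagree', hmean'⟩ :=
      ih (hK.mono (by simp)) hρ₁ hρ₁0 hcK' hend₁
    refine ⟨ρ', hρ', hρ'0, fun u hu => (hagree' u (by linarith)).trans (hagree₁ u hu), ?_⟩
    intro x hx
    rcases Finset.mem_insert.1 hx with rfl | hx
    · rw [← hmean₁]
      refine intervalIntegral.integral_congr fun u hu => ?_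
      rw [uIcc_of_le (by linarith)] at hu
      simp only [hagree' u hu.2]
    · exact hmean' x hx

lemma IsModulus.exists_profile_vanishing_left (hω : IsModulus ω) (hh : 0 < h) (hγ0 : 0 ≤ γ)
    (hγ : 2 * h * γ ≤ ∫ s in (0 : ℝ)..2 * h, modulusExt ω s) (K : Finset ℝ)
    (hK : (K : Set ℝ).Pairwise fun x y => 2 * h ≤ |x - y|) {P : ℝ} (hPK : ∀ x ∈ K, P + h ≤ x) :
    ∃ ρ : ℝ → ℝ, LipschitzWith 1 ρ ∧ (∀ u, 0 ≤ ρ u) ∧ (∀ u ≤ P, ρ u = 0) ∧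
      ∀ x ∈ K, ∫ u in (x - h)..(x + h), modulusExt ω (ρ u) = 2 * h * γ := by
  refine hω.exists_profile_of_pairwise hh hγ K hK (LipschitzWith.const' 0) (fun _ => le_rfl) hPK ?_
  rw [intervalIntegral.integral_congr (g := fun _ => 0) fun s hs => hω.modulusExt_of_nonpos ?_]
  · simp only [intervalIntegral.integral_zero]
    positivity
  · rw [uIcc_of_le (by linarith)] at hs
    linarith [hs.1]

lemma IsModulus.exists_profile_vanishing_on (hω : IsModulus ω) (hh : 0 < h) (hγ0 : 0 ≤ γ)
    (hγ : 2 * h * γ ≤ ∫ s in (0 : ℝ)..2 * h, modulusExt ω s) (K : Finset ℝ)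
    (hK : (K : Set ℝ).Pairwise fun x y => 2 * h ≤ |x - y|) {μ L : ℝ} (hL : 0 ≤ L)
    (hKL : ∀ x ∈ K, L + h ≤ |x - μ|) :
    ∃ ρ : ℝ → ℝ, LipschitzWith 1 ρ ∧ (∀ u, 0 ≤ ρ u) ∧ (∀ u, |u - μ| ≤ L → ρ u = 0) ∧
      ∀ x ∈ K, ∫ u in (x - h)..(x + h), modulusExt ω (ρ u) = 2 * h * γ := by
  obtain ⟨ρR, hRlip, hR0, hRzero, hRmean⟩ := hω.exists_profile_vanishing_left hh hγ0 hγ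
    (K.filter (μ < ·)) (hK.mono (Finset.coe_subset.2 (Finset.filter_subset _ _))) (P := μ + L)
    fun x hx => by
      rw [Finset.mem_filter] at hx
      linarith [hKL x hx.1, abs_of_pos (sub_pos.2 hx.2)]
  have hKneg : ((K.filter (· < μ)).image Neg.neg : Set ℝ).Pairwise fun x y => 2 * h ≤ |x - y| := by
    rw [Finset.coe_image, neg_injective.injOn.pairwise_image]
    refine (hK.mono (Finset.coe_subset.2 (Finset.filter_subset _ _))).imp fun x y hxy => ?_
    simpa only [Function.onFun, neg_sub_neg, abs_sub_comm y x] using hxy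
  obtain ⟨ρL, hLlip, hL0, hLzero, hLmean⟩ := hω.exists_profile_vanishing_left hh hγ0 hγ
    _ hKneg (P := L - μ) fun y hy => by
      obtain ⟨x, hx, rfl⟩ := Finset.mem_image.1 hy
      rw [Finset.mem_filter] at hx
      linarith [hKL x hx.1, abs_of_neg (sub_neg.2 hx.2)]
  refine ⟨fun u => max (ρR u) (ρL (-u)), ?_, fun u => (hR0 u).trans (le_max_left _ _),
    fun u hu => ?_, fun x hx => ?_⟩
  · simpa using hRlip.max (hLlip.comp (IsometryEquiv.neg ℝ).isometry.lipschitz)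
  · rw [abs_le] at hu
    simp only [hRzero u (by linarith), hLzero (-u) (by linarith), max_self]
  · have hxμ := hKL x hx
    rcases lt_or_gt_of_ne (show x ≠ μ by rintro rfl; simp at hxμ; linarith) with hlt | hgt
    · rw [abs_of_neg (sub_neg.2 hlt)] at hxμ
      calc _ = ∫ u in (x - h)..(x + h), modulusExt ω (ρL (-u)) :=
            intervalIntegral.integral_congr fun u hu => by
              rw [uIcc_of_le (by linarith)] at hu
              simp only [hRzero u (by linarith [hu.2]), max_eq_right (hL0 _)]
        _ = ∫ v in (-x - h)..(-x + h), modulusExt ω (ρL v) := by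
            rw [intervalIntegral.integral_comp_neg (fun v => modulusExt ω (ρL v))]
            congr 1 <;> ring
        _ = 2 * h * γ :=
            hLmean (-x) (Finset.mem_image.2 ⟨x, Finset.mem_filter.2 ⟨hx, hlt⟩, rfl⟩)
    · rw [abs_of_pos (sub_pos.2 hgt)] at hxμ
      calc _ = ∫ u in (x - h)..(x + h), modulusExt ω (ρR u) :=
            intervalIntegral.integral_congr fun u hu => by
              rw [uIcc_of_le (by linarith)] at hu
              simp only [hLzero (-u) (by linarith [hu.1]), max_eq_left (hR0 _)]
        _ = 2 * h * γ := hRmean x (Finset.mem_filter.2 ⟨hx, hgt⟩)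

end Profiles

noncomputable def extremalFun (ω : ℝ → ℝ) (h μ D C : ℝ) (ρ : ℝ → ℝ) (u : ℝ) : ℝ :=
  max (C - modulusExt ω |u - μ|) (C - modulusExt ω (D + h) + modulusExt ω (ρ u))

section extremalFun

variable {ω ρ : ℝ → ℝ} {h μ D C u : ℝ}

lemma IsModulus.extremalFun_of_abs_le (hω : IsModulus ω)
    (hρ : ∀ u, |u - μ| ≤ D + h → ρ u = 0) (hu : |u - μ| ≤ D + h) :
    extremalFun ω h μ D C ρ u = C - modulusExt ω |u - μ| := by
  rw [extremalFun, hρ u hu, hω.modulusExt_of_nonpos le_rfl, add_zero]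
  exact max_eq_left (by linarith [hω.monotone_modulusExt hu])

lemma IsModulus.extremalFun_of_le_abs (hω : IsModulus ω) (hu : D + h ≤ |u - μ|) :
    extremalFun ω h μ D C ρ u = C - modulusExt ω (D + h) + modulusExt ω (ρ u) :=
  max_eq_right (by linarith [hω.monotone_modulusExt hu, hω.modulusExt_nonneg (ρ u)])

lemma IsModulus.hasModulus_extremalFun (hω : IsModulus ω) (hρ : LipschitzWith 1 ρ) :
    HasModulus ω (extremalFun ω h μ D C ρ) :=
  ((hω.hasModulus_modulusExt_comp (LipschitzWith.dist_left μ)).const_sub C).max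
    ((hω.hasModulus_modulusExt_comp hρ).const_add _)

end extremalFun

lemma IsModulus.exists_extremal {ω : ℝ → ℝ} (hω : IsModulus ω) {h : ℝ} (hh : 0 < h) {μ D : ℝ}
    (hD : h ≤ D) (K : Finset ℝ) (hK : (K : Set ℝ).Pairwise fun x y => 2 * h ≤ |x - y|)
    (hKμ : ∀ x ∈ K, |x - μ| = D ∨ D + 2 * h ≤ |x - μ|) :
    ∃ F : ℝ → ℝ, HasModulus ω F ∧ 2 * h * F μ = ∫ s in (D - h)..(D + h), ω s ∧
      ∀ x ∈ K, ∫ u in (x - h)..(x + h), F u = 0 := by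
  set C := (∫ s in (D - h)..(D + h), ω s) / (2 * h) with hC
  have h2hC : 2 * h * C = ∫ s in (D - h)..(D + h), modulusExt ω s := by
    rw [hC, integral_modulusExt_of_nonneg (by linarith) (by linarith)]; field_simp
  -- Outside the gap `F` starts from `-γ`, `γ = ω (D + h) - C`; by subadditivity a slope-one ramp
  -- over a window has mean at least `γ`, which is what the profile needs.
  have hγ0 : 0 ≤ modulusExt ω (D + h) - C := by
    nlinarith [hω.integral_modulusExt_le_mul (x := D - h) (y := D + h) (by linarith)]
  have hγ : 2 * h * (modulusExt ω (D + h) - C) ≤ ∫ s in (0 : ℝ)..2 * h, modulusExt ω s := by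
    have := hω.mul_modulusExt_le_integral_add (L := 2 * h) (by linarith) (D + h)
    rw [show D + h - 2 * h = D - h by ring] at this
    linarith
  obtain ⟨ρ, hρ, -, hρzero, hρmean⟩ := hω.exists_profile_vanishing_on hh hγ0 hγ
    (K.filter fun x => D + 2 * h ≤ |x - μ|)
    (hK.mono (Finset.coe_subset.2 (Finset.filter_subset _ _))) (μ := μ) (L := D + h)
    (by linarith) fun x hx => by linarith [(Finset.mem_filter.1 hx).2]
  have hρc := hρ.continuous
  have hW := hω.continuous_modulusExt
  refine ⟨extremalFun ω h μ D C ρ, hω.hasModulus_extremalFun hρ, ?_, fun x hx => ?_⟩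
  · rw [hω.extremalFun_of_abs_le hρzero (by simp; linarith), sub_self, abs_zero,
      hω.modulusExt_of_nonpos le_rfl, sub_zero, hC]
    field_simp
  have hxu : ∀ u ∈ uIcc (x - h) (x + h), |u - x| ≤ h := fun u hu => by
    rw [uIcc_of_le (by linarith)] at hu
    exact abs_le.2 ⟨by linarith [hu.1], by linarith [hu.2]⟩
  rcases hKμ x hx with hxD | hfar
  · calc _ = ∫ u in (x - h)..(x + h), (C - modulusExt ω |u - μ|) :=
          intervalIntegral.integral_congr fun u hu => hω.extremalFun_of_abs_le hρzero
            (by linarith [abs_sub_le u x μ, hxu u hu])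
      _ = 0 := by
          rw [intervalIntegral.integral_sub intervalIntegrable_const
            ((by fun_prop : Continuous fun u => modulusExt ω |u - μ|).intervalIntegrable _ _),
            intervalIntegral.integral_const, integral_modulusExt_abs_sub hh.le hD hxD,
            smul_eq_mul, hC]
          field_simp
          ring
  · calc _ = ∫ u in (x - h)..(x + h), (C - modulusExt ω (D + h) + modulusExt ω (ρ u)) :=
          intervalIntegral.integral_congr fun u hu => hω.extremalFun_of_le_abs
            (by linarith [abs_sub_le x u μ, abs_sub_comm x u, hxu u hu])
      _ = 0 := by
          rw [intervalIntegral.integral_add intervalIntegrable_const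
            ((by fun_prop : Continuous fun u => modulusExt ω (ρ u)).intervalIntegrable _ _),
            intervalIntegral.integral_const, hρmean x (Finset.mem_filter.2 ⟨hx, hfar⟩),
            smul_eq_mul]
          ring

noncomputable def extendedKnots (a b : ℝ) (n : ℕ) (t : ℕ → ℝ) (i : ℕ) : ℝ :=
  if i = 0 then 2 * a - t 1 else if i = n + 1 then 2 * b - t n else t i

section extendedKnots

variable {a b : ℝ} {n : ℕ} {t : ℕ → ℝ}

lemma extendedKnots_of_mem {i : ℕ} (hi : i ∈ Finset.Icc 1 n) : extendedKnots a b n t i = t i := by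
  rw [Finset.mem_Icc] at hi
  rw [extendedKnots, if_neg (by omega), if_neg (by omega)]

lemma extendedKnots_zero_add_one (hn : 0 < n) :
    extendedKnots a b n t 0 + extendedKnots a b n t 1 = 2 * a := by
  rw [extendedKnots_of_mem (i := 1) (by simp; omega), extendedKnots, if_pos rfl]
  ring

lemma extendedKnots_last_add_succ (hn : 0 < n) :
    extendedKnots a b n t n + extendedKnots a b n t (n + 1) = 2 * b := by
  rw [extendedKnots_of_mem (i := n) (by simp; omega), extendedKnots, if_neg (by omega),
    if_pos rfl]
  ring

lemma exists_extendedKnots_wide_gap (hn : 0 < n) :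
    ∃ k ≤ n, (b - a) / (2 * n) ≤
      (extendedKnots a b n t (k + 1) - extendedKnots a b n t k) / 2 := by
  set s := extendedKnots a b n t
  set X := (b - a) / (2 * n)
  by_contra! hgap
  have htel : ∑ k ∈ Finset.range (n - 1), (s (k + 1 + 1) - s (k + 1)) = s n - s 1 := by
    rw [Finset.sum_range_sub (fun k => s (k + 1)), Nat.sub_add_cancel hn]
  have hsum : s n - s 1 ≤ 2 * n * X - 2 * X := by
    calc s n - s 1 ≤ ∑ _k ∈ Finset.range (n - 1), 2 * X :=
          htel ▸ Finset.sum_le_sum fun k hk => by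
            linarith [hgap (k + 1) (by simp at hk; omega)]
      _ = 2 * n * X - 2 * X := by simp [Nat.cast_pred hn]; ring
  have hX : 2 * n * X = b - a := by simp only [X]; field_simp
  linarith [hgap 0 (Nat.zero_le n), hgap n le_rfl, extendedKnots_zero_add_one (a := a) (b := b)
    (t := t) hn, extendedKnots_last_add_succ (a := a) (b := b) (t := t) hn]

end extendedKnots

namespace AdmKnots

variable {a b h : ℝ} {n : ℕ} {t : ℕ → ℝ}

lemma extendedKnots_add_le (ht : AdmKnots a b h n t) (hn : 0 < n) {i : ℕ} (hi : i ≤ n) :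
    extendedKnots a b n t i + 2 * h ≤ extendedKnots a b n t (i + 1) := by
  obtain ⟨ha, hmid, hb⟩ := ht
  rcases Nat.eq_zero_or_pos i with rfl | hi0
  · rw [extendedKnots_of_mem (i := 0 + 1) (by simp; omega), extendedKnots, if_pos rfl]
    linarith
  rcases hi.eq_or_lt with rfl | hin
  · rw [extendedKnots_of_mem (i := i) (by simp; omega), extendedKnots, if_neg (by omega),
      if_pos rfl]
    linarith
  · rw [extendedKnots_of_mem (i := i) (by simp; omega),
      extendedKnots_of_mem (i := i + 1) (by simp; omega)]
    linarith [hmid i hi0 hin]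

lemma extendedKnots_add_le_of_lt (ht : AdmKnots a b h n t) (hn : 0 < n) (hh : 0 ≤ h) {i j : ℕ}
    (hij : i < j) (hj : j ≤ n + 1) :
    extendedKnots a b n t i + 2 * h ≤ extendedKnots a b n t j := by
  induction j, hij using Nat.le_induction with
  | base => exact ht.extendedKnots_add_le hn (by omega)
  | succ j hij ih =>
    linarith [ih (by omega), ht.extendedKnots_add_le hn (i := j) (by omega)]

lemma extendedKnots_mono (ht : AdmKnots a b h n t) (hn : 0 < n) (hh : 0 ≤ h) {i j : ℕ}
    (hij : i ≤ j) (hj : j ≤ n + 1) : extendedKnots a b n t i ≤ extendedKnots a b n t j := by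
  rcases hij.eq_or_lt with rfl | hij
  · rfl
  · linarith [ht.extendedKnots_add_le_of_lt hn hh hij hj]

lemma pairwise_image (ht : AdmKnots a b h n t) (hn : 0 < n) (hh : 0 ≤ h) :
    (((Finset.Icc 1 n).image t : Finset ℝ) : Set ℝ).Pairwise fun x y => 2 * h ≤ |x - y| := by
  have key : ∀ i ∈ Finset.Icc 1 n, ∀ j ∈ Finset.Icc 1 n, i < j → 2 * h ≤ |t i - t j| := by
    intro i hi j hj hij
    have := ht.extendedKnots_add_le_of_lt hn hh hij (by simp at hj; omega)
    rw [extendedKnots_of_mem hi, extendedKnots_of_mem hj] at this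
    rw [abs_sub_comm, abs_of_nonneg (by linarith)]
    linarith
  rintro _ hx _ hy hne
  obtain ⟨i, hi, rfl⟩ := Finset.mem_image.1 hx
  obtain ⟨j, hj, rfl⟩ := Finset.mem_image.1 hy
  rcases lt_trichotomy i j with hij | rfl | hij
  · exact key i hi j hj hij
  · exact absurd rfl hne
  · rw [abs_sub_comm]; exact key j hj i hi hij

lemma exists_gap (ht : AdmKnots a b h n t) (hn : 0 < n) (hh : 0 ≤ h) :
    ∃ μ ∈ Icc a b, ∃ D, (b - a) / (2 * n) ≤ D ∧
      ∀ x ∈ (Finset.Icc 1 n).image t, |x - μ| = D ∨ D + 2 * h ≤ |x - μ| := by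
  obtain ⟨k, hk, hgap⟩ := exists_extendedKnots_wide_gap (a := a) (b := b) (t := t) hn
  set s := extendedKnots a b n t
  have hmono {i j : ℕ} (hij : i ≤ j) (hj : j ≤ n + 1) : s i ≤ s j :=
    ht.extendedKnots_mono hn hh hij hj
  have hsep {i j : ℕ} (hij : i < j) (hj : j ≤ n + 1) : s i + 2 * h ≤ s j :=
    ht.extendedKnots_add_le_of_lt hn hh hij hj
  have hk0 := extendedKnots_zero_add_one (a := a) (b := b) (t := t) hn
  have hkn := extendedKnots_last_add_succ (a := a) (b := b) (t := t) hn
  have hkk := hmono (Nat.le_add_right k 1) (by omega)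
  refine ⟨(s k + s (k + 1)) / 2, ⟨?_, ?_⟩, (s (k + 1) - s k) / 2, hgap, fun x hx => ?_⟩
  · linarith [hmono (Nat.zero_le k) (by omega), hmono (Nat.succ_le_succ (Nat.zero_le k)) (by omega)]
  · linarith [hmono hk (by omega), hmono (Nat.succ_le_succ hk) le_rfl]
  obtain ⟨i, hi, rfl⟩ := Finset.mem_image.1 hx
  have hi' := Finset.mem_Icc.1 hi
  rw [← show s i = t i from extendedKnots_of_mem hi]
  rcases lt_trichotomy i k with hik | rfl | hik
  · right
    rw [abs_of_nonpos (by linarith [hsep hik (by omega)])]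
    linarith [hsep hik (by omega)]
  · left
    rw [abs_of_nonpos (by linarith)]
    ring
  rcases (show k + 1 = i ∨ k + 1 < i by omega) with hik | hik
  · left
    rw [← hik, abs_of_nonneg (by linarith)]
    ring
  · right
    rw [abs_of_nonneg (by linarith [hsep hik (by omega)])]
    linarith [hsep hik (by omega)]

end AdmKnots

lemma meanInfo_smul_eq_zero {E : Type*} [NormedAddCommGroup E] [NormedSpace ℝ E] [CompleteSpace E]
    {h : ℝ} {n : ℕ} {t : ℕ → ℝ} {F : ℝ → ℝ}
    (hF : ∀ x ∈ (Finset.Icc 1 n).image t, ∫ u in (x - h)..(x + h), F u = 0) (e : E) :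
    meanInfo h n t (fun u => F u • e) = 0 := by
  ext i
  rw [meanInfo, intervalIntegral.integral_smul_const,
    hF _ (Finset.mem_image_of_mem t (by simp)), zero_smul, smul_zero, Pi.zero_apply]

lemma IsModulus.le_of_forall_norm_sub_le {E : Type*} [NormedAddCommGroup E] [NormedSpace ℝ E]
    [CompleteSpace E] [Nontrivial E] {ω : ℝ → ℝ} (hω : IsModulus ω) {a b h : ℝ} {n : ℕ}
    {t : ℕ → ℝ} (ht : AdmKnots a b h n t) (hn : 0 < n) (hh : 0 < h)
    (hδh : h ≤ (b - a) / (2 * n)) {Φ : (Fin n → E) → ℝ → E} {c : ℝ}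
    (hc : ∀ f : ℝ → E, HHolder ω a b f → ∀ u ∈ Icc a b, ‖f u - Φ (meanInfo h n t f) u‖ ≤ c) :
    (1 / (2 * h)) * ∫ s in ((b - a) / (2 * n) - h)..((b - a) / (2 * n) + h), ω s ≤ c := by
  obtain ⟨μ, hμ, D, hδD, hgap⟩ := ht.exists_gap hn hh.le
  obtain ⟨F, hF, hFμ, hFmean⟩ :=
    hω.exists_extremal hh (hδh.trans hδD) _ (ht.pairwise_image hn hh.le) hgap
  obtain ⟨e, he⟩ := exists_norm_eq E zero_le_one
  have h₁ := hc _ (hF.hHolder_smul he a b) μ hμ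
  have h₂ := hc _ ((hF.const_sub 0).hHolder_smul he a b) μ hμ
  rw [meanInfo_smul_eq_zero hFmean] at h₁
  rw [meanInfo_smul_eq_zero fun x hx => by simp [hFmean x hx]] at h₂
  have hFc : 2 * F μ ≤ 2 * c :=
    calc 2 * F μ ≤ ‖F μ • e - (0 - F μ) • e‖ := by
          rw [← sub_smul, norm_smul, he, mul_one, Real.norm_eq_abs]
          exact le_of_eq_of_le (by ring) (le_abs_self _)
      _ ≤ ‖F μ • e - Φ 0 μ‖ + ‖Φ 0 μ - (0 - F μ) • e‖ := norm_sub_le_norm_sub_add_norm_sub _ _ _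
      _ ≤ 2 * c := by rw [norm_sub_rev (Φ 0 μ)]; linarith
  calc (1 / (2 * h)) * ∫ s in ((b - a) / (2 * n) - h)..((b - a) / (2 * n) + h), ω s
      ≤ (1 / (2 * h)) * ∫ s in (D - h)..(D + h), ω s := by
        gcongr
        rw [← integral_modulusExt_abs_window_of_le hh.le hδh]
        exact hω.integral_modulusExt_abs_window_le hh.le (by rwa [abs_of_nonneg (by linarith)])
          (hδh.trans hδD)
    _ = F μ := by rw [← hFμ]; field_simp
    _ ≤ c := by linarith

/-- Optimal recovery of the identity operator on `H^ω([a,b],E)` from mean values of the function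
over `n` intervals of length `2h`: the optimal error equals
`(1/(2h)) ∫_{(b−a)/(2n)−h}^{(b−a)/(2n)+h} ω(u) du`; it is attained at the uniform knots with the
piecewise-constant method `stepMethod`. -/
theorem optimal_recovery_identity_mean_values
    {E : Type*} [NormedAddCommGroup E] [NormedSpace ℝ E] [CompleteSpace E] [Nontrivial E]
    (ω : ℝ → ℝ) (hω : IsModulus ω)
    (a b : ℝ) (hab : a < b) (n : ℕ) (hn : 0 < n) (h : ℝ) (hh : 0 < h)
    (hnh : 2 * (n : ℝ) * h < b - a) :
    (AdmKnots a b h n (uniformKnots a b n) ∧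
      ∀ f : ℝ → E, HHolder ω a b f → ∀ u ∈ Set.Icc a b,
        ‖f u - stepMethod a b n (meanInfo h n (uniformKnots a b n) f) u‖ ≤
          (1 / (2 * h)) *
            ∫ s in ((b - a) / (2 * (n : ℝ)) - h)..((b - a) / (2 * (n : ℝ)) + h), ω s) ∧
    ∀ t : ℕ → ℝ, AdmKnots a b h n t → ∀ Φ : (Fin n → E) → ℝ → E, ∀ c : ℝ,
      (∀ f : ℝ → E, HHolder ω a b f → ∀ u ∈ Set.Icc a b,
        ‖f u - Φ (meanInfo h n t f) u‖ ≤ c) →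
      (1 / (2 * h)) *
          ∫ s in ((b - a) / (2 * (n : ℝ)) - h)..((b - a) / (2 * (n : ℝ)) + h), ω s ≤ c := by
  have hδh : h < (b - a) / (2 * n) := by
    rw [lt_div_iff₀ (by positivity)]
    linarith
  exact ⟨⟨admKnots_uniformKnots hn hδh, fun f hf u hu =>
    hω.norm_sub_stepMethod_le hab hn hh hδh.le hf hu⟩,
    fun t ht Φ c hc => hω.le_of_forall_norm_sub_le ht hn hh hδh.le hc⟩
end

section
/- Existence of an ω-spline vanishing at the partition points with large uniform norm: Let ω be a concave modulus of continuity and let a = t₀ < t₁ < … < t_n = b be a partition of [a,b]. Then there exists a function f ∈ W^1H^ω([a,b],ℝ) such that f(t_i) = 0 for all i = 0, 1, …, n and max_{t∈[a,b]} |f(t)| ≥ (1/4)·∫_0^{(b−a)/n} ω(u) du. -/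
open MeasureTheory Set

/-!
`f'` is a chain of humps `x ↦ ± ω (2 min (x - p) (q - x)) / 2` of alternating sign between
consecutive zeros `Z 0 ≤ Z 1 ≤ ⋯ ≤ Z (n + 1)`, with `Z (k + 1)` in the cell `[t k, t (k + 1)]`
and phantom zeros `Z 0`, `Z (n + 1)` far outside `[a, b]`. Within a hump `f'` is `H^ω` by
subadditivity, across a zero by concavity: `ω (2 u) / 2 + ω (2 v) / 2 ≤ ω (u + v)`.

The zeros are placed so that `f'` integrates to `0` over every cell, whence `f = ∫ₐ f'` vanishes
at every node. Moving a neighbouring zero to the right moves the balancing position of a zero to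
the right, so Tarski's fixed-point theorem on the box of admissible positions yields such zeros.

Then `|f (Z k)| + |f (Z (k + 1))| = ½ ∫₀^{Z (k + 1) - Z k} ω`, while
`|f (Z 1)| = ¼ ∫₀^{2 (Z 1 - a)} ω` and `|f (Z n)| = ¼ ∫₀^{2 (b - Z n)} ω`. The lengths
`2 (Z 1 - a)`, `Z (k + 1) - Z k`, `2 (b - Z n)`, weighted `½, 1, …, 1, ½`, add up to `b - a` with
total weight `n`, so one of them is at least `(b - a) / n`.
-/

open intervalIntegral

noncomputable section

variable {ω : ℝ → ℝ}

/-- `ω` extended to `(-∞, 0]` by `ω 0 = 0`; it makes `hump ω p q` vanish outside `[p, q]`. -/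
def clampMod (ω : ℝ → ℝ) (s : ℝ) : ℝ := ω (max s 0)

theorem clampMod_of_nonneg {s : ℝ} (hs : 0 ≤ s) : clampMod ω s = ω s := by
  simp [clampMod, hs]

namespace IsModulus

variable (hω : IsModulus ω)
include hω

theorem clampMod_eq_zero_of_nonpos {s : ℝ} (hs : s ≤ 0) : clampMod ω s = 0 := by
  simp [clampMod, hs, hω.1]

theorem monotone_clampMod : Monotone (clampMod ω) := fun _ _ hst =>
  hω.2.2.1 (mem_Ici.2 (le_max_right _ _)) (mem_Ici.2 (le_max_right _ _)) (max_le_max hst le_rfl)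

theorem clampMod_nonneg (s : ℝ) : 0 ≤ clampMod ω s :=
  hω.1 ▸ hω.2.2.1 self_mem_Ici (mem_Ici.2 (le_max_right _ _)) (le_max_right s 0)

theorem continuous_clampMod : Continuous (clampMod ω) :=
  hω.2.1.comp_continuous (continuous_id.max continuous_const) fun _ => mem_Ici.2 (le_max_right _ _)

theorem clampMod_le_add {s : ℝ} (d : ℝ) (hd : 0 ≤ d) :
    clampMod ω (s + d) ≤ clampMod ω s + clampMod ω d := by
  rw [clampMod_of_nonneg hd]
  calc clampMod ω (s + d) ≤ ω (max s 0 + d) :=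
        hω.2.2.1 (mem_Ici.2 (le_max_right _ _)) (mem_Ici.2 (by positivity))
          (max_le (by gcongr; exact le_max_left _ _) (by positivity))
    _ ≤ _ := hω.2.2.2 _ _ (le_max_right _ _) hd

theorem abs_clampMod_sub_le (p q : ℝ) :
    |clampMod ω p - clampMod ω q| ≤ clampMod ω |p - q| := by
  wlog hqp : q ≤ p generalizing p q
  · rw [abs_sub_comm, abs_sub_comm p]; exact this q p (le_of_not_ge hqp)
  have := hω.clampMod_le_add (s := q) (p - q) (sub_nonneg.2 hqp)
  rw [add_sub_cancel] at this
  rw [abs_of_nonneg (sub_nonneg.2 hqp), abs_of_nonneg (sub_nonneg.2 (hω.monotone_clampMod hqp))]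
  linarith

end IsModulus

theorem ConcaveOn.clampMod_two_mul_add_le (hconc : ConcaveOn ℝ (Ici 0) ω) {u v : ℝ}
    (hu : 0 ≤ u) (hv : 0 ≤ v) :
    clampMod ω (2 * u) + clampMod ω (2 * v) ≤ 2 * clampMod ω (u + v) := by
  have h := hconc.2 (mem_Ici.2 (by positivity : 0 ≤ 2 * u))
    (mem_Ici.2 (by positivity : 0 ≤ 2 * v))
    (by norm_num : (0 : ℝ) ≤ 1 / 2) (by norm_num : (0 : ℝ) ≤ 1 / 2) (by norm_num)
  simp only [smul_eq_mul] at h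
  rw [clampMod_of_nonneg (by positivity), clampMod_of_nonneg (by positivity),
    clampMod_of_nonneg (by positivity)]
  have hmid : (1 / 2 : ℝ) * (2 * u) + 1 / 2 * (2 * v) = u + v := by ring
  rw [hmid] at h
  linarith

def hump (ω : ℝ → ℝ) (p q x : ℝ) : ℝ := clampMod ω (2 * min (x - p) (q - x)) / 2

theorem hump_add_sub (p q x : ℝ) : hump ω p q (p + q - x) = hump ω p q x := by
  simp only [hump]
  rw [min_comm]
  ring_nf

theorem integral_hump_right_half {p q c : ℝ} (hcq : c ≤ q) (hmid : p + q ≤ 2 * c) :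
    ∫ x in c..q, hump ω p q x = (∫ s in 0..2 * (q - c), clampMod ω s) / 4 := by
  have hEq : EqOn (hump ω p q) (fun x => clampMod ω (2 * q - 2 * x) / 2) (uIcc c q) := by
    intro x hx
    rw [uIcc_of_le hcq] at hx
    simp only [hump]
    rw [min_eq_right (by linarith [hx.1])]
    ring_nf
  rw [integral_congr hEq, intervalIntegral.integral_div, integral_comp_sub_mul _ two_ne_zero]
  simp only [smul_eq_mul, sub_self]
  ring_nf

theorem integral_hump_left_half {p q c : ℝ} (hpc : p ≤ c) (hmid : 2 * c ≤ p + q) :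
    ∫ x in p..c, hump ω p q x = (∫ s in 0..2 * (c - p), clampMod ω s) / 4 := by
  have hsymm : ∫ x in p..c, hump ω p q x = ∫ x in p..c, hump ω p q (p + q - x) := by
    simp only [hump_add_sub]
  rw [hsymm, integral_comp_sub_left (hump ω p q), add_sub_cancel_left,
    integral_hump_right_half (by linarith) (by linarith)]
  ring_nf

namespace IsModulus

variable (hω : IsModulus ω)
include hω

theorem hump_nonneg (p q x : ℝ) : 0 ≤ hump ω p q x :=
  div_nonneg (hω.clampMod_nonneg _) zero_le_two

theorem hump_eq_zero {p q x : ℝ} (h : x ≤ p ∨ q ≤ x) : hump ω p q x = 0 := by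
  rw [hump, hω.clampMod_eq_zero_of_nonpos, zero_div]
  rcases h with h | h
  · linarith [min_le_left (x - p) (q - x)]
  · linarith [min_le_right (x - p) (q - x)]

theorem hump_le_left (p q x : ℝ) : hump ω p q x ≤ clampMod ω (2 * (x - p)) / 2 := by
  unfold hump
  gcongr
  exact hω.monotone_clampMod (by linarith [min_le_left (x - p) (q - x)])

theorem hump_le_right (p q x : ℝ) : hump ω p q x ≤ clampMod ω (2 * (q - x)) / 2 := by
  unfold hump
  gcongr
  exact hω.monotone_clampMod (by linarith [min_le_right (x - p) (q - x)])

theorem hump_anti_left {p p' : ℝ} (q x : ℝ) (hp : p' ≤ p) :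
    hump ω p q x ≤ hump ω p' q x := by
  unfold hump
  gcongr
  exact hω.monotone_clampMod (by gcongr)

theorem hump_mono_right {q q' : ℝ} (p x : ℝ) (hq : q ≤ q') :
    hump ω p q x ≤ hump ω p q' x := by
  unfold hump
  gcongr
  exact hω.monotone_clampMod (by gcongr)

theorem abs_hump_sub_le (p q x y : ℝ) :
    |hump ω p q x - hump ω p q y| ≤ clampMod ω (2 * |x - y|) / 2 := by
  have hmin : |min (x - p) (q - x) - min (y - p) (q - y)| ≤ |x - y| := by
    have h := abs_min_sub_min_le_max (x - p) (q - x) (y - p) (q - y)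
    rwa [sub_sub_sub_cancel_right, sub_sub_sub_cancel_left, abs_sub_comm y, max_self] at h
  rw [hump, hump, ← sub_div, abs_div, abs_two]
  gcongr
  refine (hω.abs_clampMod_sub_le _ _).trans (hω.monotone_clampMod ?_)
  rw [← mul_sub, abs_mul, abs_two]
  gcongr

theorem continuous_uncurry_hump : Continuous fun v : ℝ × ℝ × ℝ => hump ω v.1 v.2.1 v.2.2 :=
  (hω.continuous_clampMod.comp (by fun_prop)).div_const 2

theorem continuous_hump (p q : ℝ) : Continuous (hump ω p q) :=
  hω.continuous_uncurry_hump.comp (f := fun x => (p, q, x)) (by fun_prop)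

theorem integral_hump {p q : ℝ} (hpq : p ≤ q) :
    ∫ x in p..q, hump ω p q x = (∫ s in 0..q - p, clampMod ω s) / 2 := by
  have hint := (hω.continuous_hump p q).intervalIntegrable (μ := volume)
  rw [← integral_add_adjacent_intervals (hint p ((p + q) / 2)) (hint _ q),
    integral_hump_left_half (by linarith) (by linarith),
    integral_hump_right_half (by linarith) (by linarith)]
  ring_nf

end IsModulus

theorem ContinuousOn.apply_sSup_setOf_nonpos_eq_zero {φ : ℝ → ℝ} {c e : ℝ} (hce : c ≤ e)
    (hφ : ContinuousOn φ (Icc c e)) (hc : φ c ≤ 0) (he : 0 ≤ φ e) :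
    sSup {v ∈ Icc c e | φ v ≤ 0} ∈ Icc c e ∧
      φ (sSup {v ∈ Icc c e | φ v ≤ 0}) = 0 := by
  set S := {v ∈ Icc c e | φ v ≤ 0}
  have hbdd : BddAbove S := ⟨e, fun v hv => hv.1.2⟩
  have hmem : sSup S ∈ S :=
    (hφ.preimage_isClosed_of_isClosed isClosed_Icc isClosed_Iic).csSup_mem
      ⟨c, ⟨le_rfl, hce⟩, hc⟩ hbdd
  -- the IVT on `[sSup S, e]` produces a zero in `S`, which can only be `sSup S` itself
  obtain ⟨v, hv, hφv⟩ :=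
    intermediate_value_Icc hmem.1.2 (hφ.mono (Icc_subset_Icc_left hmem.1.1)) ⟨hmem.2, he⟩
  have hvS : v ≤ sSup S := le_csSup hbdd ⟨⟨hmem.1.1.trans hv.1, hv.2⟩, hφv.le⟩
  exact ⟨hmem.1, le_antisymm hvS hv.1 ▸ hφv⟩

theorem exists_mem_Icc_forall_apply_self_eq_zero {ι : Type*} {c e : ι → ℝ} (hce : c ≤ e)
    (Φ : (ι → ℝ) → ι → ℝ → ℝ)
    (hcont : ∀ z k, ContinuousOn (Φ z k) (Icc (c k) (e k)))
    (hc : ∀ z k, Φ z k (c k) ≤ 0) (he : ∀ z k, 0 ≤ Φ z k (e k))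
    (hanti : ∀ z z', z ≤ z' → ∀ k, ∀ v ∈ Icc (c k) (e k), Φ z' k v ≤ Φ z k v) :
    ∃ z ∈ Icc c e, ∀ k, Φ z k (z k) = 0 := by
  have : Fact (c ≤ e) := ⟨hce⟩
  let S : (ι → ℝ) → ι → Set ℝ := fun z k => {v ∈ Icc (c k) (e k) | Φ z k v ≤ 0}
  have hS z k := (hcont z k).apply_sSup_setOf_nonpos_eq_zero (hce k) (hc z k) (he z k)
  -- Tarski: `z ↦ (k ↦ sSup (S z k))` is monotone on the complete lattice `Icc c e`
  let F : Icc c e →o Icc c e :=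
    { toFun := fun z => ⟨fun k => sSup (S z k), fun k => (hS z k).1.1, fun k => (hS z k).1.2⟩
      monotone' := fun z z' hzz' k => csSup_le_csSup ⟨e k, fun v hv => hv.1.2⟩
        ⟨c k, ⟨le_rfl, hce k⟩, hc z k⟩
        fun v hv => ⟨hv.1, (hanti z z' hzz' k v hv.1).trans hv.2⟩ }
  refine ⟨F.lfp, F.lfp.2, fun k => ?_⟩
  have hfix : (F.lfp : ι → ℝ) k = sSup (S F.lfp k) := by
    conv_lhs => rw [← F.map_lfp]
    rfl
  rw [hfix]
  exact (hS _ k).2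

theorem exists_mem_Icc_succ_of_mem_Icc (Z : ℕ → ℝ) {N : ℕ} {x : ℝ}
    (hx : x ∈ Icc (Z 0) (Z (N + 1))) : ∃ k ≤ N, x ∈ Icc (Z k) (Z (k + 1)) := by
  induction N with
  | zero => exact ⟨0, le_rfl, hx⟩
  | succ N ih =>
    by_cases hxN : x ≤ Z (N + 1)
    · obtain ⟨k, hk, hxk⟩ := ih ⟨hx.1, hxN⟩
      exact ⟨k, hk.trans N.le_succ, hxk⟩
    · exact ⟨N + 1, le_rfl, le_of_not_ge hxN, hx.2⟩

def alternatingHumps (ω : ℝ → ℝ) (Z : ℕ → ℝ) (N : ℕ) (x : ℝ) : ℝ :=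
  ∑ k ∈ Finset.range N, (-1) ^ k * hump ω (Z k) (Z (k + 1)) x

namespace IsModulus

variable (hω : IsModulus ω)
include hω

theorem continuous_alternatingHumps (Z : ℕ → ℝ) (N : ℕ) :
    Continuous (alternatingHumps ω Z N) :=
  continuous_finsetSum _ fun _ _ => continuous_const.mul (hω.continuous_hump _ _)

theorem alternatingHumps_eq_of_mem {Z : ℕ → ℝ} (hZ : Monotone Z) {N k : ℕ} (hk : k < N)
    {x : ℝ} (hx : x ∈ Icc (Z k) (Z (k + 1))) :
    alternatingHumps ω Z N x = (-1) ^ k * hump ω (Z k) (Z (k + 1)) x := by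
  refine Finset.sum_eq_single_of_mem k (Finset.mem_range.2 hk) fun j _ hjk => ?_
  rw [hω.hump_eq_zero, mul_zero]
  rcases lt_or_gt_of_ne hjk with h | h
  · exact Or.inr ((hZ (Nat.succ_le_of_lt h)).trans hx.1)
  · exact Or.inl (hx.2.trans (hZ (Nat.succ_le_of_lt h)))

theorem abs_alternatingHumps_eq_of_mem {Z : ℕ → ℝ} (hZ : Monotone Z) {N k : ℕ} (hk : k < N)
    {x : ℝ} (hx : x ∈ Icc (Z k) (Z (k + 1))) :
    |alternatingHumps ω Z N x| = hump ω (Z k) (Z (k + 1)) x := by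
  rw [hω.alternatingHumps_eq_of_mem hZ hk hx, abs_mul, abs_pow, abs_neg, abs_one, one_pow,
    one_mul, abs_of_nonneg (hω.hump_nonneg _ _ _)]

theorem abs_alternatingHumps_sub_le (hconc : ConcaveOn ℝ (Ici 0) ω) {Z : ℕ → ℝ}
    (hZ : Monotone Z) {N : ℕ} {x y : ℝ} (hx : x ∈ Icc (Z 0) (Z (N + 1)))
    (hy : y ∈ Icc (Z 0) (Z (N + 1))) :
    |alternatingHumps ω Z (N + 1) x - alternatingHumps ω Z (N + 1) y| ≤ ω |x - y| := by
  wlog hyx : y ≤ x generalizing x y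
  · rw [abs_sub_comm, abs_sub_comm x]
    exact this hy hx (le_of_not_ge hyx)
  obtain ⟨k, hk, hxk⟩ := exists_mem_Icc_succ_of_mem_Icc Z hx
  obtain ⟨j, hj, hyj⟩ := exists_mem_Icc_succ_of_mem_Icc Z hy
  rw [← clampMod_of_nonneg (ω := ω) (abs_nonneg (x - y)), abs_of_nonneg (sub_nonneg.2 hyx)]
  rcases lt_or_ge j k with hjk | hkj
  · have hzeros : Z (j + 1) ≤ Z k := hZ (Nat.succ_le_of_lt hjk)
    calc |alternatingHumps ω Z (N + 1) x - alternatingHumps ω Z (N + 1) y|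
        ≤ |alternatingHumps ω Z (N + 1) x| + |alternatingHumps ω Z (N + 1) y| := abs_sub _ _
      _ = hump ω (Z k) (Z (k + 1)) x + hump ω (Z j) (Z (j + 1)) y := by
        rw [hω.abs_alternatingHumps_eq_of_mem hZ (Nat.lt_succ_of_le hk) hxk,
          hω.abs_alternatingHumps_eq_of_mem hZ (Nat.lt_succ_of_le hj) hyj]
      _ ≤ clampMod ω (2 * (x - Z k)) / 2 + clampMod ω (2 * (Z (j + 1) - y)) / 2 :=
        add_le_add (hω.hump_le_left _ _ _) (hω.hump_le_right _ _ _)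
      _ ≤ clampMod ω ((x - Z k) + (Z (j + 1) - y)) := by
        linarith [hconc.clampMod_two_mul_add_le (sub_nonneg.2 hxk.1) (sub_nonneg.2 hyj.2)]
      _ ≤ clampMod ω (x - y) := hω.monotone_clampMod (by linarith)
  · have hyk : y ∈ Icc (Z k) (Z (k + 1)) := ⟨(hZ hkj).trans hyj.1, hyx.trans hxk.2⟩
    rw [hω.alternatingHumps_eq_of_mem hZ (Nat.lt_succ_of_le hk) hxk,
      hω.alternatingHumps_eq_of_mem hZ (Nat.lt_succ_of_le hk) hyk, ← mul_sub, abs_mul, abs_pow,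
      abs_neg, abs_one, one_pow, one_mul]
    have hzero : clampMod ω (2 * 0) = 0 := hω.clampMod_eq_zero_of_nonpos (by norm_num)
    have hhalf := hconc.clampMod_two_mul_add_le (sub_nonneg.2 hyx) le_rfl
    rw [hzero, add_zero, add_zero] at hhalf
    have hstep := hω.abs_hump_sub_le (Z k) (Z (k + 1)) x y
    rw [abs_of_nonneg (sub_nonneg.2 hyx)] at hstep
    linarith

end IsModulus

/-- `Z` are the zeros of `alternatingHumps ω Z (n + 1)`, placed so that its integral over every
cell `[t k, t (k + 1)]` vanishes. -/
structure IsBalancedZeros (ω : ℝ → ℝ) (n : ℕ) (t Z : ℕ → ℝ) : Prop where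
  monotone : Monotone Z
  zero_eq : Z 0 = 2 * t 0 - t n
  succ_eq : Z (n + 1) = 2 * t n - t 0
  interlace : ∀ k ≤ n, t k ∈ Icc (Z k) (Z (k + 1))
  balance : ∀ k < n, ∫ x in t k..Z (k + 1), hump ω (Z k) (Z (k + 1)) x =
    ∫ x in Z (k + 1)..t (k + 1), hump ω (Z (k + 1)) (Z (k + 2)) x

/-- The zero `Z k` of `f'` is sought in `[zeroBoxLo n t k, zeroBoxHi n t k]`: the cell
`[t (k - 1), t k]` for `1 ≤ k ≤ n`, and the phantom point `2 * t 0 - t n`, resp.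
`2 * t n - t 0`, otherwise. -/
def zeroBoxLo (n : ℕ) (t : ℕ → ℝ) (k : ℕ) : ℝ :=
  if k = 0 then 2 * t 0 - t n else if k ≤ n then t (k - 1) else 2 * t n - t 0

def zeroBoxHi (n : ℕ) (t : ℕ → ℝ) (k : ℕ) : ℝ :=
  if k = 0 then 2 * t 0 - t n else if k ≤ n then t k else 2 * t n - t 0

section ZeroBox

variable {n : ℕ} {t : ℕ → ℝ}

theorem zeroBoxLo_le_zeroBoxHi (ht : ∀ k < n, t k ≤ t (k + 1)) :
    zeroBoxLo n t ≤ zeroBoxHi n t := by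
  intro k
  simp only [zeroBoxLo, zeroBoxHi]
  split_ifs with h0 hkn
  · rfl
  · simpa [Nat.sub_add_cancel (Nat.pos_of_ne_zero h0)] using ht (k - 1) (by omega)
  · rfl

theorem zeroBoxHi_le_and_le_zeroBoxLo_succ (h0n : t 0 ≤ t n) {k : ℕ} (hk : k ≤ n) :
    zeroBoxHi n t k ≤ t k ∧ t k ≤ zeroBoxLo n t (k + 1) := by
  rcases Nat.eq_zero_or_pos k with rfl | hk0
  · rcases Nat.eq_zero_or_pos n with rfl | hn0
    · simp only [zeroBoxLo, zeroBoxHi]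
      simp
      constructor <;> linarith
    · simp [zeroBoxLo, zeroBoxHi, Nat.one_le_iff_ne_zero.2 hn0.ne']
      linarith
  rcases hk.lt_or_eq with hkn | rfl
  · simp [zeroBoxLo, zeroBoxHi, hk0.ne', hk, Nat.succ_le_of_lt hkn]
  · simp [zeroBoxLo, zeroBoxHi, hk0.ne']
    linarith

theorem zeroBox_of_lt {k : ℕ} (hk : n < k) :
    zeroBoxLo n t k = 2 * t n - t 0 ∧ zeroBoxHi n t k = 2 * t n - t 0 := by
  simp [zeroBoxLo, zeroBoxHi, (Nat.zero_le n).trans_lt hk |>.ne', hk.not_ge]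

theorem zeroBox_succ {k : ℕ} (hk : k < n) :
    zeroBoxLo n t (k + 1) = t k ∧ zeroBoxHi n t (k + 1) = t (k + 1) := by
  simp [zeroBoxLo, zeroBoxHi, Nat.succ_le_of_lt hk]

end ZeroBox

/-- Up to the sign `(-1) ^ (k - 1)`, the integral of `alternatingHumps ω z` over `[c k, e k]`
when its zero there is moved to `v`. -/
def humpImbalance (ω : ℝ → ℝ) (c e z : ℕ → ℝ) (k : ℕ) (v : ℝ) : ℝ :=
  (∫ x in c k..v, hump ω (z (k - 1)) v x) - ∫ x in v..e k, hump ω v (z (k + 1)) x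

namespace IsModulus

variable (hω : IsModulus ω) {c e z : ℕ → ℝ} {k : ℕ}
include hω

theorem continuous_humpImbalance : Continuous (humpImbalance ω c e z k) := by
  have hleft : Continuous (Function.uncurry fun v x => hump ω (z (k - 1)) v x) :=
    hω.continuous_uncurry_hump.comp (f := fun w : ℝ × ℝ => (_, w.1, w.2)) (by fun_prop)
  have hright : Continuous (Function.uncurry fun v x => hump ω v (z (k + 1)) x) :=
    hω.continuous_uncurry_hump.comp (f := fun w : ℝ × ℝ => (w.1, _, w.2)) (by fun_prop)
  unfold humpImbalance
  simp only [integral_symm (e k)]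
  exact (continuous_parametric_intervalIntegral_of_continuous hleft continuous_id).sub
    (continuous_parametric_intervalIntegral_of_continuous hright continuous_id).neg

theorem humpImbalance_lo_nonpos (hce : c k ≤ e k) : humpImbalance ω c e z k (c k) ≤ 0 := by
  simp only [humpImbalance, integral_same, zero_sub, neg_nonpos]
  exact integral_nonneg hce fun _ _ => hω.hump_nonneg _ _ _

theorem humpImbalance_hi_nonneg (hce : c k ≤ e k) : 0 ≤ humpImbalance ω c e z k (e k) := by
  simp only [humpImbalance, integral_same, sub_zero]
  exact integral_nonneg hce fun _ _ => hω.hump_nonneg _ _ _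

theorem humpImbalance_anti {z' : ℕ → ℝ} (hzz' : z ≤ z') {v : ℝ}
    (hv : v ∈ Icc (c k) (e k)) :
    humpImbalance ω c e z' k v ≤ humpImbalance ω c e z k v := by
  have hint p q := (hω.continuous_hump p q).intervalIntegrable (μ := volume)
  exact sub_le_sub
    (integral_mono_on hv.1 (hint _ _ _ _) (hint _ _ _ _)
      fun _ _ => hω.hump_anti_left _ _ (hzz' _))
    (integral_mono_on hv.2 (hint _ _ _ _) (hint _ _ _ _)
      fun _ _ => hω.hump_mono_right _ _ (hzz' _))

end IsModulus

theorem IsModulus.exists_isBalancedZeros (hω : IsModulus ω) {n : ℕ} {t : ℕ → ℝ}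
    (ht : ∀ k < n, t k ≤ t (k + 1)) (h0n : t 0 ≤ t n) : ∃ Z, IsBalancedZeros ω n t Z := by
  have hbox := zeroBoxLo_le_zeroBoxHi ht
  obtain ⟨Z, hZ, hbal⟩ := exists_mem_Icc_forall_apply_self_eq_zero hbox
    (humpImbalance ω (zeroBoxLo n t) (zeroBoxHi n t))
    (fun _ _ => hω.continuous_humpImbalance.continuousOn)
    (fun _ k => hω.humpImbalance_lo_nonpos (hbox k))
    (fun _ k => hω.humpImbalance_hi_nonneg (hbox k))
    (fun _ _ hzz' _ _ hv => hω.humpImbalance_anti hzz' hv)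
  have hinterlace : ∀ k ≤ n, t k ∈ Icc (Z k) (Z (k + 1)) := fun k hk =>
    ⟨(hZ.2 k).trans (zeroBoxHi_le_and_le_zeroBoxLo_succ h0n hk).1,
      (zeroBoxHi_le_and_le_zeroBoxLo_succ h0n hk).2.trans (hZ.1 (k + 1))⟩
  have hlast := zeroBox_of_lt (t := t) n.lt_succ_self
  refine ⟨Z, monotone_nat_of_le_succ fun k => ?_, le_antisymm (hZ.2 0) (hZ.1 0),
    le_antisymm (hlast.2 ▸ hZ.2 (n + 1)) (hlast.1 ▸ hZ.1 (n + 1)), hinterlace, fun k hk => ?_⟩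
  · rcases le_or_gt k n with hk | hk
    · exact (hinterlace k hk).1.trans (hinterlace k hk).2
    · calc Z k ≤ zeroBoxHi n t k := hZ.2 k
        _ = zeroBoxLo n t (k + 1) := by
          rw [(zeroBox_of_lt hk).2, (zeroBox_of_lt (hk.trans k.lt_succ_self)).1]
        _ ≤ Z (k + 1) := hZ.1 (k + 1)
  · have := hbal (k + 1)
    simp only [humpImbalance, Nat.add_sub_cancel, zeroBox_succ hk] at this
    exact sub_eq_zero.1 this

theorem IsModulus.monotone_integral_clampMod (hω : IsModulus ω) :
    Monotone fun L => ∫ s in 0..L, clampMod ω s := by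
  intro L L' hLL'
  have hint := fun u v => hω.continuous_clampMod.intervalIntegrable (μ := volume) u v
  simp only [← integral_add_adjacent_intervals (hint 0 L) (hint L L'), le_add_iff_nonneg_right]
  exact integral_nonneg hLL' fun x _ => hω.clampMod_nonneg x

theorem exists_lt_le_of_gaps {W : ℝ → ℝ} (hW : Monotone W) {n : ℕ} (hn : 0 < n) {a b : ℝ}
    (z m : ℕ → ℝ) (hfirst : W (2 * (z 1 - a)) ≤ 4 * m 0)
    (hmid : ∀ k, k + 1 < n → W (z (k + 2) - z (k + 1)) ≤ 2 * (m k + m (k + 1)))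
    (hlast : W (2 * (b - z n)) ≤ 4 * m (n - 1)) :
    ∃ k < n, W ((b - a) / n) ≤ 4 * m k := by
  by_contra! hsmall
  set δ := (b - a) / n
  have hgap : ∀ L, W L < W δ → L < δ := fun L hL => lt_of_not_ge fun h => (hW h).not_gt hL
  have h1 : 2 * (z 1 - a) < δ := hgap _ (by linarith [hsmall 0 hn])
  have h2 : ∀ k, k + 1 < n → z (k + 2) - z (k + 1) < δ := fun k hk =>
    hgap _ (by linarith [hmid k hk, hsmall k (by omega), hsmall (k + 1) hk])
  have h3 : 2 * (b - z n) < δ := hgap _ (by linarith [hsmall (n - 1) (by omega)])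
  have htel : ∑ k ∈ Finset.range (n - 1), (z (k + 2) - z (k + 1)) = z n - z 1 := by
    rw [Finset.sum_range_sub (fun k => z (k + 1)), Nat.sub_add_cancel hn]
  have hsum : ∑ k ∈ Finset.range (n - 1), (z (k + 2) - z (k + 1)) ≤ (n - 1 : ℕ) * δ := by
    simpa using Finset.sum_le_sum (s := Finset.range (n - 1)) fun k hk =>
      (h2 k (by have := Finset.mem_range.1 hk; omega)).le
  have hδ : (n : ℝ) * δ = b - a := mul_div_cancel₀ _ (Nat.cast_ne_zero.2 hn.ne')
  rw [Nat.cast_pred hn] at hsum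
  nlinarith

namespace IsBalancedZeros

variable {n : ℕ} {t Z : ℕ → ℝ} (hZ : IsBalancedZeros ω n t Z) (hω : IsModulus ω)

include hZ in
theorem mem_Icc {k : ℕ} (hk : k < n) : Z (k + 1) ∈ Icc (t 0) (t n) :=
  ⟨(hZ.interlace 0 (Nat.zero_le n)).2.trans (hZ.monotone (by omega)),
    (hZ.monotone (by omega : k + 1 ≤ n)).trans (hZ.interlace n le_rfl).1⟩

include hZ hω

theorem integral_alternatingHumps_of_subset {k : ℕ} (hk : k < n + 1) {u v : ℝ} (huv : u ≤ v)
    (hsub : Icc u v ⊆ Icc (Z k) (Z (k + 1))) :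
    ∫ x in u..v, alternatingHumps ω Z (n + 1) x =
      (-1) ^ k * ∫ x in u..v, hump ω (Z k) (Z (k + 1)) x := by
  rw [← intervalIntegral.integral_const_mul]
  refine integral_congr fun x hx => ?_
  rw [uIcc_of_le huv] at hx
  exact hω.alternatingHumps_eq_of_mem hZ.monotone hk (hsub hx)

theorem integral_alternatingHumps_cell {k : ℕ} (hk : k < n) :
    ∫ x in t k..t (k + 1), alternatingHumps ω Z (n + 1) x = 0 := by
  have hg := hω.continuous_alternatingHumps Z (n + 1)
  obtain ⟨hZt, htZ⟩ := hZ.interlace k hk.le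
  obtain ⟨hZt', htZ'⟩ := hZ.interlace (k + 1) hk
  rw [← integral_add_adjacent_intervals (hg.intervalIntegrable _ (Z (k + 1)))
      (hg.intervalIntegrable _ _),
    hZ.integral_alternatingHumps_of_subset hω (k.lt_succ_of_lt hk) htZ (Icc_subset_Icc_left hZt),
    hZ.integral_alternatingHumps_of_subset hω (Nat.succ_lt_succ hk) hZt'
      (Icc_subset_Icc_right htZ'), hZ.balance k hk, pow_succ]
  ring

theorem integral_alternatingHumps_node {k : ℕ} (hk : k ≤ n) :
    ∫ x in t 0..t k, alternatingHumps ω Z (n + 1) x = 0 := by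
  rw [← sum_integral_adjacent_intervals fun i _ =>
    (hω.continuous_alternatingHumps Z (n + 1)).intervalIntegrable _ _]
  exact Finset.sum_eq_zero fun i hi =>
    hZ.integral_alternatingHumps_cell hω ((Finset.mem_range.1 hi).trans_le hk)

theorem abs_integral_alternatingHumps_zero {k : ℕ} (hk : k < n) :
    |∫ x in t 0..Z (k + 1), alternatingHumps ω Z (n + 1) x| =
      ∫ x in t k..Z (k + 1), hump ω (Z k) (Z (k + 1)) x := by
  have hg := hω.continuous_alternatingHumps Z (n + 1)
  obtain ⟨hZt, htZ⟩ := hZ.interlace k hk.le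
  rw [← integral_add_adjacent_intervals (hg.intervalIntegrable _ (t k))
      (hg.intervalIntegrable _ _),
    hZ.integral_alternatingHumps_node hω hk.le, zero_add,
    hZ.integral_alternatingHumps_of_subset hω (k.lt_succ_of_lt hk) htZ (Icc_subset_Icc_left hZt),
    abs_mul, abs_pow, abs_neg, abs_one, one_pow, one_mul,
    abs_of_nonneg (integral_nonneg htZ fun _ _ => hω.hump_nonneg _ _ _)]

theorem exists_le_abs_integral_alternatingHumps (hn : 0 < n) :
    ∃ k < n, (∫ s in 0..(t n - t 0) / n, clampMod ω s) ≤
      4 * |∫ x in t 0..Z (k + 1), alternatingHumps ω Z (n + 1) x| := by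
  set A : ℕ → ℝ := fun k => ∫ x in t k..Z (k + 1), hump ω (Z k) (Z (k + 1)) x
  have hfirst : (∫ s in 0..2 * (Z 1 - t 0), clampMod ω s) ≤ 4 * A 0 := by
    have h := integral_hump_right_half (ω := ω) (hZ.interlace 0 (Nat.zero_le n)).2
      (by linarith [hZ.zero_eq, (hZ.mem_Icc hn).2] : Z 0 + Z 1 ≤ 2 * t 0)
    simp only [A]
    linarith
  have hmid : ∀ k, k + 1 < n →
      (∫ s in 0..Z (k + 2) - Z (k + 1), clampMod ω s) ≤ 2 * (A k + A (k + 1)) := by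
    intro k hk
    have hint := (hω.continuous_hump (Z (k + 1)) (Z (k + 2))).intervalIntegrable (μ := volume)
    have hsplit := integral_add_adjacent_intervals (hint (Z (k + 1)) (t (k + 1)))
      (hint (t (k + 1)) (Z (k + 2)))
    rw [hω.integral_hump (hZ.monotone (Nat.le_succ _)), ← hZ.balance k (by omega)] at hsplit
    simp only [A]
    linarith
  have hlast : (∫ s in 0..2 * (t n - Z n), clampMod ω s) ≤ 4 * A (n - 1) := by
    obtain ⟨m, rfl⟩ : ∃ m, n = m + 1 := ⟨n - 1, by omega⟩
    have h := integral_hump_left_half (ω := ω) (hZ.interlace (m + 1) le_rfl).1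
      (by linarith [hZ.succ_eq, (hZ.mem_Icc (Nat.lt_succ_self m)).1] :
        2 * t (m + 1) ≤ Z (m + 1) + Z (m + 2))
    simp only [A, Nat.add_sub_cancel, hZ.balance m (Nat.lt_succ_self m)]
    linarith
  obtain ⟨k, hk, hle⟩ :=
    exists_lt_le_of_gaps hω.monotone_integral_clampMod hn Z A hfirst hmid hlast
  exact ⟨k, hk, by rwa [hZ.abs_integral_alternatingHumps_zero hω hk]⟩

end IsBalancedZeros

/-- Existence of an `ω`-spline from `W¹H^ω([a,b],ℝ)` vanishing at all partition points and
having uniform norm at least `(1/4) ∫_0^{(b−a)/n} ω(u) du` (concave modulus). -/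
theorem omega_spline_exists
    (ω : ℝ → ℝ) (hω : IsModulus ω) (hconc : ConcaveOn ℝ (Set.Ici 0) ω)
    (a b : ℝ) (hab : a < b) (n : ℕ) (hn : 0 < n)
    (t : ℕ → ℝ) (ht0 : t 0 = a) (htn : t n = b) (htmono : ∀ i, i < n → t i < t (i + 1)) :
    ∃ f f' : ℝ → ℝ,
      (∀ u ∈ Set.Icc a b, HasDerivWithinAt f (f' u) (Set.Icc a b) u) ∧
      HHolder ω a b f' ∧
      (∀ i ≤ n, f (t i) = 0) ∧
      ∃ u ∈ Set.Icc a b, (1 / 4) * ∫ s in (0:ℝ)..((b - a) / (n : ℝ)), ω s ≤ |f u| := by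
  obtain ⟨Z, hZ⟩ :=
    hω.exists_isBalancedZeros (fun k hk => (htmono k hk).le) (ht0 ▸ htn ▸ hab.le)
  subst ht0 htn
  set g := alternatingHumps ω Z (n + 1)
  have hsub : Icc (t 0) (t n) ⊆ Icc (Z 0) (Z (n + 1)) := fun x hx =>
    ⟨(hZ.interlace 0 (Nat.zero_le n)).1.trans hx.1, hx.2.trans (hZ.interlace n le_rfl).2⟩
  refine ⟨fun x => ∫ s in t 0..x, g s, g,
    fun u _ => ((hω.continuous_alternatingHumps Z _).integral_hasStrictDerivAt _ u).hasDerivAt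
      |>.hasDerivWithinAt,
    fun x hx y hy => hω.abs_alternatingHumps_sub_le hconc hZ.monotone (hsub hy) (hsub hx),
    fun i hi => hZ.integral_alternatingHumps_node hω hi, ?_⟩
  obtain ⟨k, hk, hle⟩ := hZ.exists_le_abs_integral_alternatingHumps hω hn
  have hδ : 0 ≤ (t n - t 0) / n := div_nonneg (by linarith) n.cast_nonneg
  refine ⟨Z (k + 1), hZ.mem_Icc hk, ?_⟩
  rw [integral_congr fun s hs => (clampMod_of_nonneg (ω := ω) (uIcc_of_le hδ ▸ hs).1).symm]
  linarith

end
end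

section
/- Optimal recovery of the derivative from function values at uniform knots on W^1H^ω: Let ω be a modulus of continuity, E a nontrivial real Banach space, a < b, n ≥ 1, and let t*_k = a + k(b−a)/n for k = 0, 1, …, n. Then the infimum, over all maps Φ: E^{n+1} → ([a,b] → E), of sup_{f ∈ W^1H^ω([a,b],E)} sup_{t∈[a,b]} ‖f′(t) − Φ(f(t*₀),…,f(t*_n))(t)‖ equals (n/(b−a))·∫_0^{(b−a)/n} ω(u) du. The infimum is attained by the method Φ* assigning the derivative of the interpolating polygonal line, namely Φ*(y₀,…,y_n)(t) = (n/(b−a))·(y_{k+1} − y_k) for t ∈ [t*_k, t*_{k+1}), k = 0,…,n−1, and Φ*(y₀,…,y_n)(b) = (n/(b−a))·(y_n − y_{n−1}). -/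
open MeasureTheory Set

/-- The class `W¹H^ω([a,b],E)`: `f` is differentiable on `[a,b]` with derivative `f'` belonging
to `H^ω([a,b],E)`. -/
def W1HHolder {E : Type*} [NormedAddCommGroup E] [NormedSpace ℝ E]
    (ω : ℝ → ℝ) (a b : ℝ) (f f' : ℝ → E) : Prop :=
  (∀ t ∈ Set.Icc a b, HasDerivWithinAt f (f' t) (Set.Icc a b) t) ∧ HHolder ω a b f'

/-- The index of the subinterval of the uniform partition containing `u`
(`u ∈ [t*_k, t*_{k+1})`, with the last index `n − 1` used at `u = b`). -/
noncomputable def unifIdx (a b : ℝ) (n : ℕ) (u : ℝ) : ℕ :=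
  min (n - 1) ⌊(u - a) * n / (b - a)⌋₊

/-- The uniform partition points `t*_k = a + k(b − a)/n`. -/
noncomputable def unifPt (a b : ℝ) (n : ℕ) : ℕ → ℝ :=
  fun k => a + (k : ℝ) * (b - a) / (n : ℝ)

/-- The method recovering the derivative: the derivative of the interpolating polygonal line,
`Φ*(y₀,…,y_n)(u) = (n/(b−a)) (y_{k+1} − y_k)` for `u ∈ [t*_k, t*_{k+1})` (and `k = n − 1` at
`u = b`). -/
noncomputable def polyDerivMethod {E : Type*} [NormedAddCommGroup E] [NormedSpace ℝ E]
    (a b : ℝ) (n : ℕ) (y : Fin (n + 1) → E) (u : ℝ) : E :=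
  if hn : 0 < n then
    ((n : ℝ) / (b - a)) •
      (y ⟨unifIdx a b n u + 1, by unfold unifIdx; omega⟩ -
        y ⟨unifIdx a b n u, by unfold unifIdx; omega⟩)
  else 0

/-! On the knot interval `[p, q]` of length `h` containing `u`, the polygonal method returns the
slope `(f q - f p) / h`. The mean value inequality for `t ↦ f t - t • f' u`, whose derivative has
norm at most `ω |t - u|`, bounds the error at `u` by `h⁻¹ ∫_p^q ω |s - u| ds ≤ h⁻¹ ∫_0^h ω`; the
last step holds because `x ↦ ∫_0^x ω` is superadditive for nondecreasing `ω`.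

Conversely, let `δ` be the distance to the even knots `a + 2mh`, a 1-Lipschitz sawtooth, and
`G = h⁻¹ ∫_0^h ω - ω ∘ δ`. Then `G ∈ H^ω`, `G a = h⁻¹ ∫_0^h ω`, and `G` has mean zero on every
knot interval, so `g = ∫_a G` vanishes at all knots. The functions `± g e`, `‖e‖ = 1`, carry the
same (zero) data, so no method can have error below `‖G a‖` at `a` for both of them. -/

open intervalIntegral

section Modulus

variable {ω : ℝ → ℝ}

theorem IsModulus.nonneg (hω : IsModulus ω) {x : ℝ} (hx : 0 ≤ x) : 0 ≤ ω x :=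
  hω.1 ▸ hω.2.2.1 self_mem_Ici hx hx

theorem IsModulus.abs_sub_le (hω : IsModulus ω) {x y : ℝ} (hx : 0 ≤ x) (hy : 0 ≤ y) :
    |ω x - ω y| ≤ ω |x - y| := by
  wlog hyx : y ≤ x generalizing x y
  · rw [abs_sub_comm, abs_sub_comm x]
    exact this hy hx (le_of_not_ge hyx)
  have hsub := hω.2.2.2 (x - y) y (sub_nonneg.2 hyx) hy
  rw [sub_add_cancel] at hsub
  rw [abs_of_nonneg (sub_nonneg.2 (hω.2.2.1 hy hx hyx)), abs_of_nonneg (sub_nonneg.2 hyx)]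
  linarith

theorem integral_add_integral_le_of_monotoneOn (hm : MonotoneOn ω (Ici 0)) {α β : ℝ}
    (hα : 0 ≤ α) (hβ : 0 ≤ β) :
    (∫ s in 0..α, ω s) + ∫ s in 0..β, ω s ≤ ∫ s in 0..α + β, ω s := by
  have hint : ∀ {p q : ℝ}, 0 ≤ p → 0 ≤ q → IntervalIntegrable ω volume p q := fun hp hq =>
    (hm.mono fun x hx => le_trans (le_min hp hq) hx.1).intervalIntegrable
  have hshift : (∫ s in 0..β, ω s) ≤ ∫ s in 0..β, ω (s + α) := by
    refine integral_mono_on hβ (hint le_rfl hβ) ?_ fun s hs =>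
      hm hs.1 (add_nonneg hs.1 hα) (le_add_of_nonneg_right hα)
    refine MonotoneOn.intervalIntegrable fun x hx y hy hxy => hm ?_ ?_ (by linarith)
    · rw [uIcc_of_le hβ] at hx
      exact add_nonneg hx.1 hα
    · rw [uIcc_of_le hβ] at hy
      exact add_nonneg hy.1 hα
  have htranslate : ∫ s in 0..β, ω (s + α) = ∫ s in α..α + β, ω s := by
    rw [integral_comp_add_right, zero_add, add_comm β]
  rw [← integral_add_adjacent_intervals (hint le_rfl hα) (hint hα (add_nonneg hα hβ))]
  linarith

theorem continuous_comp_abs_sub (hc : ContinuousOn ω (Ici 0)) (u : ℝ) :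
    Continuous fun s => ω |s - u| :=
  hc.comp_continuous (continuous_id.sub continuous_const).abs fun _ => mem_Ici.2 (abs_nonneg _)

theorem integral_comp_abs_sub_le (hc : ContinuousOn ω (Ici 0)) (hm : MonotoneOn ω (Ici 0))
    {p q u : ℝ} (hpu : p ≤ u) (huq : u ≤ q) :
    ∫ s in p..q, ω |s - u| ≤ ∫ s in 0..q - p, ω s := by
  have hcont := continuous_comp_abs_sub hc u
  have hleft : ∫ s in p..u, ω |s - u| = ∫ s in 0..u - p, ω s := by
    rw [integral_congr (g := fun s => ω (u - s)) fun s hs => ?_, integral_comp_sub_left,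
      sub_self]
    rw [uIcc_of_le hpu] at hs
    simp only [abs_sub_comm s u, abs_of_nonneg (sub_nonneg.2 hs.2)]
  have hright : ∫ s in u..q, ω |s - u| = ∫ s in 0..q - u, ω s := by
    rw [integral_congr (g := fun s => ω (s - u)) fun s hs => ?_, integral_comp_sub_right,
      sub_self]
    rw [uIcc_of_le huq] at hs
    simp only [abs_of_nonneg (sub_nonneg.2 hs.1)]
  rw [← integral_add_adjacent_intervals (hcont.intervalIntegrable p u)
    (hcont.intervalIntegrable u q), hleft, hright]
  simpa using integral_add_integral_le_of_monotoneOn hm (sub_nonneg.2 hpu) (sub_nonneg.2 huq)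

end Modulus

section MeanValue

variable {E : Type*} [NormedAddCommGroup E] [NormedSpace ℝ E]

theorem norm_sub_le_integral_of_norm_deriv_le {f f' : ℝ → E} {B : ℝ → ℝ} {p q : ℝ}
    (hf : ∀ t ∈ Icc p q, HasDerivWithinAt f (f' t) (Icc p q) t) (hB : Continuous B)
    (bound : ∀ t ∈ Ico p q, ‖f' t‖ ≤ B t) (hpq : p ≤ q) :
    ‖f q - f p‖ ≤ ∫ t in p..q, B t :=
  image_norm_le_of_norm_deriv_right_le_deriv_boundary (f := fun t => f t - f p)
    (fun t ht => (hf t ht).continuousWithinAt.sub continuousWithinAt_const)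
    (fun t ht => ((hf t (Ico_subset_Icc_self ht)).mono_of_mem_nhdsWithin
      (Icc_mem_nhdsGE_of_mem ht)).sub_const (f p))
    (by simp) (fun x => (hB.integral_hasStrictDerivAt p x).hasDerivAt) bound
    (right_mem_Icc.2 hpq)

theorem norm_sub_sub_smul_deriv_le {ω : ℝ → ℝ} (hc : ContinuousOn ω (Ici 0))
    (hm : MonotoneOn ω (Ici 0)) {f f' : ℝ → E} {p q u : ℝ}
    (hf : ∀ t ∈ Icc p q, HasDerivWithinAt f (f' t) (Icc p q) t)
    (hf' : ∀ t ∈ Icc p q, ‖f' t - f' u‖ ≤ ω |t - u|) (hpu : p ≤ u) (huq : u ≤ q) :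
    ‖f q - f p - (q - p) • f' u‖ ≤ ∫ s in 0..q - p, ω s := by
  have hg : ∀ t ∈ Icc p q,
      HasDerivWithinAt (fun t => f t - t • f' u) (f' t - f' u) (Icc p q) t := fun t ht => by
    simpa only [one_smul, id] using (hf t ht).fun_sub ((hasDerivWithinAt_id t _).smul_const (f' u))
  calc ‖f q - f p - (q - p) • f' u‖ = ‖(f q - q • f' u) - (f p - p • f' u)‖ := by
        rw [sub_smul]; congr 1; abel
    _ ≤ ∫ t in p..q, ω |t - u| :=
        norm_sub_le_integral_of_norm_deriv_le hg (continuous_comp_abs_sub hc u)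
          (fun t ht => hf' t (Ico_subset_Icc_self ht)) (hpu.trans huq)
    _ ≤ ∫ s in 0..q - p, ω s := integral_comp_abs_sub_le hc hm hpu huq

end MeanValue

section UniformKnots

variable {a b : ℝ} {n : ℕ}

theorem unifPt_eq_add_mul (a b : ℝ) (n k : ℕ) : unifPt a b n k = a + k * ((b - a) / n) := by
  simp only [unifPt]; ring

theorem unifPt_succ_sub (a b : ℝ) (n k : ℕ) :
    unifPt a b n (k + 1) - unifPt a b n k = (b - a) / n := by
  simp only [unifPt]; push_cast; ring

theorem Icc_unifPt_subset (hab : a < b) {k : ℕ} (hk : k < n) :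
    Icc (unifPt a b n k) (unifPt a b n (k + 1)) ⊆ Icc a b := by
  have hn : (0 : ℝ) < n := by exact_mod_cast k.zero_le.trans_lt hk
  have hk' : ((k + 1 : ℕ) : ℝ) ≤ n := by exact_mod_cast hk
  have hba : 0 ≤ b - a := by linarith
  refine Icc_subset_Icc ?_ ?_ <;> simp only [unifPt]
  · have : 0 ≤ (k : ℝ) * (b - a) / n := by positivity
    linarith
  · have : ((k + 1 : ℕ) : ℝ) * (b - a) / n ≤ b - a := by
      rw [div_le_iff₀ hn]; nlinarith
    linarith

theorem unifIdx_lt (hn : 0 < n) (u : ℝ) : unifIdx a b n u < n := by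
  unfold unifIdx; omega

theorem mem_Icc_unifPt_unifIdx (hab : a < b) (hn : 0 < n) {u : ℝ} (hu : u ∈ Icc a b) :
    u ∈ Icc (unifPt a b n (unifIdx a b n u)) (unifPt a b n (unifIdx a b n u + 1)) := by
  have hba : 0 < b - a := by linarith
  have hn' : (0 : ℝ) < n := by exact_mod_cast hn
  set x := (u - a) * n / (b - a) with hx
  have hx0 : 0 ≤ x := div_nonneg (mul_nonneg (by linarith [hu.1]) hn'.le) hba.le
  have hxn : x ≤ n := by rw [hx, div_le_iff₀ hba]; nlinarith [hu.2]
  have hux : u = a + x * (b - a) / n := by rw [hx]; field_simp; ring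
  set k := unifIdx a b n u
  have hk_def : k = min (n - 1) ⌊x⌋₊ := rfl
  have hkx : (k : ℝ) ≤ x :=
    le_trans (by exact_mod_cast min_le_right _ _) (Nat.floor_le hx0)
  have hxk : x ≤ k + 1 := by
    rcases min_cases (n - 1) ⌊x⌋₊ with ⟨hk, hle⟩ | ⟨hk, -⟩
    · have : (k : ℝ) + 1 = n := by exact_mod_cast (show k + 1 = n by omega)
      linarith
    · rw [hk_def, hk]
      exact (Nat.lt_floor_add_one x).le
  rw [hux]
  constructor <;> simp only [unifPt] <;> push_cast <;> gcongr

end UniformKnots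

section Recovery

variable {E : Type*} [NormedAddCommGroup E] [NormedSpace ℝ E] {ω : ℝ → ℝ} {a b : ℝ} {n : ℕ}

theorem polyDerivMethod_unifPt (hn : 0 < n) (g : ℝ → E) (u : ℝ) :
    polyDerivMethod a b n (fun i : Fin (n + 1) => g (unifPt a b n i)) u =
      ((n : ℝ) / (b - a)) •
        (g (unifPt a b n (unifIdx a b n u + 1)) - g (unifPt a b n (unifIdx a b n u))) :=
  dif_pos hn

theorem norm_sub_polyDerivMethod_le (hω : IsModulus ω) (hab : a < b) (hn : 0 < n)
    {f f' : ℝ → E} (hf : W1HHolder ω a b f f') {u : ℝ} (hu : u ∈ Icc a b) :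
    ‖f' u - polyDerivMethod a b n (fun i : Fin (n + 1) => f (unifPt a b n i)) u‖ ≤
      ((n : ℝ) / (b - a)) * ∫ s in (0 : ℝ)..((b - a) / n), ω s := by
  set k := unifIdx a b n u
  set h := (b - a) / n
  have hh : 0 < h := div_pos (by linarith) (by exact_mod_cast hn)
  have hsub := Icc_unifPt_subset hab (unifIdx_lt (a := a) (b := b) hn u)
  have hu' := mem_Icc_unifPt_unifIdx hab hn hu
  have hslope := norm_sub_sub_smul_deriv_le hω.2.1 hω.2.2.1
    (fun t ht => (hf.1 t (hsub ht)).mono hsub) (fun t ht => hf.2 u hu t (hsub ht)) hu'.1 hu'.2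
  rw [unifPt_succ_sub] at hslope
  set D := f (unifPt a b n (k + 1)) - f (unifPt a b n k)
  have hdiff : f' u - h⁻¹ • D = -(h⁻¹ • (D - h • f' u)) := by
    simp only [smul_sub, smul_smul, inv_mul_cancel₀ hh.ne', one_smul]; abel
  rw [polyDerivMethod_unifPt hn, ← inv_div, hdiff, norm_neg, norm_smul,
    Real.norm_of_nonneg (inv_nonneg.2 hh.le)]
  gcongr

end Recovery

section Sawtooth

noncomputable def sawtooth (a h s : ℝ) : ℝ :=
  Metric.infDist s (range fun m : ℤ => a + 2 * h * m)

variable {a h : ℝ}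

theorem sawtooth_nonneg (a h s : ℝ) : 0 ≤ sawtooth a h s := Metric.infDist_nonneg

theorem lipschitzWith_one_sawtooth (a h : ℝ) : LipschitzWith 1 (sawtooth a h) :=
  Metric.lipschitz_infDist_pt _

theorem sawtooth_base (a h : ℝ) : sawtooth a h a = 0 :=
  Metric.infDist_zero_of_mem ⟨0, by simp⟩

theorem sawtooth_eq_min (hh : 0 < h) (j : ℤ) {s : ℝ}
    (hs : s ∈ Icc (a + 2 * h * j) (a + 2 * h * j + 2 * h)) :
    sawtooth a h s = min (s - (a + 2 * h * j)) (a + 2 * h * j + 2 * h - s) := by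
  have hmem : ∀ m : ℤ, a + 2 * h * m ∈ range fun m : ℤ => a + 2 * h * m := fun m => ⟨m, rfl⟩
  apply le_antisymm
  · refine le_min ?_ ?_
    · simpa [sawtooth, Real.dist_eq, abs_of_nonneg (sub_nonneg.2 hs.1)] using
        Metric.infDist_le_dist_of_mem (x := s) (hmem j)
    · have hle := Metric.infDist_le_dist_of_mem (x := s) (hmem (j + 1))
      rw [Real.dist_eq, abs_sub_comm, abs_of_nonneg (by push_cast; linarith [hs.2])] at hle
      push_cast at hle
      unfold sawtooth
      linarith
  · refine (Metric.le_infDist ⟨_, hmem 0⟩).2 ?_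
    rintro _ ⟨m, rfl⟩
    rw [Real.dist_eq]
    rcases le_or_gt m j with hm | hm
    · have : (m : ℝ) ≤ j := by exact_mod_cast hm
      have : 2 * h * m ≤ 2 * h * j := by gcongr
      exact (min_le_left _ _).trans ((le_abs_self _).trans' (by linarith))
    · have : (j : ℝ) + 1 ≤ m := by exact_mod_cast hm
      have : 2 * h * (j + 1) ≤ 2 * h * m := by gcongr
      exact (min_le_right _ _).trans ((neg_le_abs _).trans' (by linarith))

theorem continuous_comp_sawtooth {ω : ℝ → ℝ} (hc : ContinuousOn ω (Ici 0)) (a h : ℝ) :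
    Continuous fun s => ω (sawtooth a h s) :=
  hc.comp_continuous (lipschitzWith_one_sawtooth a h).continuous
    fun s => mem_Ici.2 (sawtooth_nonneg a h s)

theorem integral_comp_sawtooth (ω : ℝ → ℝ) (hh : 0 < h) (k : ℕ) :
    ∫ s in (a + k * h)..(a + (k + 1) * h), ω (sawtooth a h s) = ∫ s in 0..h, ω s := by
  obtain ⟨j, rfl | rfl⟩ := Nat.even_or_odd' k
  · have hends : a + ↑(2 * j) * h = a + 2 * h * (j : ℤ) ∧
        a + (↑(2 * j) + 1) * h = a + 2 * h * (j : ℤ) + h := by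
      constructor <;> push_cast <;> ring
    rw [hends.1, hends.2]
    set c := a + 2 * h * (j : ℤ)
    have hsaw : EqOn (fun s => ω (sawtooth a h s)) (fun s => ω (s - c)) (uIcc c (c + h)) :=
      fun s hs => by
        rw [uIcc_of_le (by linarith)] at hs
        have hmin : sawtooth a h s = min (s - c) (c + 2 * h - s) :=
          sawtooth_eq_min hh j ⟨hs.1, by linarith [hs.2]⟩
        simp only [hmin, min_eq_left (by linarith [hs.2] : s - c ≤ c + 2 * h - s)]
    rw [integral_congr hsaw, integral_comp_sub_right, sub_self, add_sub_cancel_left]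
  · have hends : a + ↑(2 * j + 1) * h = a + 2 * h * (j : ℤ) + 2 * h - h ∧
        a + (↑(2 * j + 1) + 1) * h = a + 2 * h * (j : ℤ) + 2 * h := by
      constructor <;> push_cast <;> ring
    rw [hends.1, hends.2]
    set c := a + 2 * h * (j : ℤ)
    have hsaw : EqOn (fun s => ω (sawtooth a h s)) (fun s => ω (c + 2 * h - s))
        (uIcc (c + 2 * h - h) (c + 2 * h)) := fun s hs => by
      rw [uIcc_of_le (by linarith)] at hs
      have hmin : sawtooth a h s = min (s - c) (c + 2 * h - s) :=
        sawtooth_eq_min hh j ⟨by linarith [hs.1], hs.2⟩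
      simp only [hmin, min_eq_right (by linarith [hs.1] : c + 2 * h - s ≤ s - c)]
    rw [integral_congr hsaw, integral_comp_sub_left, sub_self, sub_sub_cancel]

end Sawtooth

section Extremal

variable {ω : ℝ → ℝ} {a b h : ℝ}

noncomputable def extremalDeriv (ω : ℝ → ℝ) (a h s : ℝ) : ℝ :=
  h⁻¹ * (∫ t in 0..h, ω t) - ω (sawtooth a h s)

theorem extremalDeriv_base (h0 : ω 0 = 0) :
    extremalDeriv ω a h a = h⁻¹ * ∫ t in 0..h, ω t := by
  rw [extremalDeriv, sawtooth_base, h0, sub_zero]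

theorem continuous_extremalDeriv (hc : ContinuousOn ω (Ici 0)) :
    Continuous (extremalDeriv ω a h) :=
  continuous_const.sub (continuous_comp_sawtooth hc a h)

theorem abs_extremalDeriv_sub_le (hω : IsModulus ω) (s t : ℝ) :
    |extremalDeriv ω a h t - extremalDeriv ω a h s| ≤ ω |t - s| := by
  have hlip : |sawtooth a h s - sawtooth a h t| ≤ |t - s| := by
    simpa [Real.dist_eq, abs_sub_comm t s] using
      (lipschitzWith_one_sawtooth a h).dist_le_mul s t
  calc |extremalDeriv ω a h t - extremalDeriv ω a h s|
      = |ω (sawtooth a h s) - ω (sawtooth a h t)| := by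
        simp only [extremalDeriv]; ring_nf
    _ ≤ ω |sawtooth a h s - sawtooth a h t| :=
        hω.abs_sub_le (sawtooth_nonneg a h s) (sawtooth_nonneg a h t)
    _ ≤ ω |t - s| := hω.2.2.1 (mem_Ici.2 (abs_nonneg _)) (mem_Ici.2 (abs_nonneg _)) hlip

theorem integral_extremalDeriv_knot (hc : ContinuousOn ω (Ici 0)) (hh : 0 < h) (k : ℕ) :
    ∫ s in a..a + k * h, extremalDeriv ω a h s = 0 := by
  have hint : ∀ x y, IntervalIntegrable (extremalDeriv ω a h) volume x y :=
    (continuous_extremalDeriv hc).intervalIntegrable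
  induction k with
  | zero => simp
  | succ k ih =>
    rw [← integral_add_adjacent_intervals (hint _ _) (hint _ _), ih, zero_add, Nat.cast_succ]
    simp only [extremalDeriv]
    rw [integral_sub intervalIntegrable_const
        ((continuous_comp_sawtooth hc a h).intervalIntegrable _ _),
      integral_comp_sawtooth ω hh, intervalIntegral.integral_const, smul_eq_mul, ← mul_assoc,
      show a + (k + 1) * h - (a + k * h) = h by ring, mul_inv_cancel₀ hh.ne', one_mul, sub_self]

theorem W1HHolder_extremalDeriv (hω : IsModulus ω) :
    W1HHolder ω a b (fun t => ∫ s in a..t, extremalDeriv ω a h s) (extremalDeriv ω a h) :=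
  ⟨fun t _ => ((continuous_extremalDeriv hω.2.1).integral_hasStrictDerivAt a t).hasDerivAt
      |>.hasDerivWithinAt,
    fun s _ t _ => abs_extremalDeriv_sub_le hω s t⟩

end Extremal

section LowerBound

variable {E : Type*} [NormedAddCommGroup E] [NormedSpace ℝ E] {ω : ℝ → ℝ} {a b : ℝ} {n : ℕ}

theorem W1HHolder.smul_const {g G : ℝ → ℝ} (hg : W1HHolder ω a b g G) {e : E} (he : ‖e‖ ≤ 1) :
    W1HHolder ω a b (fun t => g t • e) (fun t => G t • e) := by
  refine ⟨fun t ht => (hg.1 t ht).smul_const e, fun s hs t ht => ?_⟩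
  rw [← sub_smul, norm_smul]
  exact (mul_le_of_le_one_right (norm_nonneg _) he).trans (hg.2 s hs t ht)

theorem norm_le_of_norm_sub_le_of_norm_neg_sub_le {x y : E} {c : ℝ} (h₁ : ‖x - y‖ ≤ c)
    (h₂ : ‖-x - y‖ ≤ c) : ‖x‖ ≤ c := by
  have : (2 : ℝ) • x = (x - y) - (-x - y) := by rw [two_smul]; abel
  have h2x : 2 * ‖x‖ ≤ 2 * c := by
    calc 2 * ‖x‖ = ‖(x - y) - (-x - y)‖ := by rw [← this, norm_smul, Real.norm_two]
      _ ≤ ‖x - y‖ + ‖-x - y‖ := norm_sub_le _ _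
      _ ≤ 2 * c := by linarith
  linarith

theorem le_of_forall_W1HHolder_norm_sub_le [Nontrivial E] (hω : IsModulus ω) (hab : a < b)
    (hn : 0 < n) (Φ : (Fin (n + 1) → E) → ℝ → E) (c : ℝ)
    (hΦ : ∀ f f' : ℝ → E, W1HHolder ω a b f f' → ∀ u ∈ Icc a b,
      ‖f' u - Φ (fun i : Fin (n + 1) => f (unifPt a b n i)) u‖ ≤ c) :
    ((n : ℝ) / (b - a)) * ∫ s in (0 : ℝ)..((b - a) / n), ω s ≤ c := by
  set h := (b - a) / n
  have hh : 0 < h := div_pos (by linarith) (by exact_mod_cast hn)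
  set C := h⁻¹ * ∫ s in 0..h, ω s
  have hC : 0 ≤ C := mul_nonneg (inv_nonneg.2 hh.le)
    (integral_nonneg hh.le fun s hs => hω.nonneg hs.1)
  have hextremal : ∀ v : E, ‖v‖ = 1 → ‖C • v - Φ 0 a‖ ≤ c := by
    intro v hv
    have hdata : (fun i : Fin (n + 1) =>
        (∫ s in a..unifPt a b n i, extremalDeriv ω a h s) • v) = 0 := by
      funext i
      rw [unifPt_eq_add_mul, integral_extremalDeriv_knot hω.2.1 hh, zero_smul, Pi.zero_apply]
    simpa only [hdata, extremalDeriv_base hω.1] using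
      hΦ _ _ ((W1HHolder_extremalDeriv (h := h) hω).smul_const hv.le) a ⟨le_rfl, hab.le⟩
  obtain ⟨e, he⟩ := exists_norm_eq E zero_le_one
  have hbound := norm_le_of_norm_sub_le_of_norm_neg_sub_le (hextremal e he)
    (by simpa only [smul_neg] using hextremal (-e) (by rw [norm_neg, he]))
  rw [norm_smul, he, mul_one, Real.norm_of_nonneg hC] at hbound
  rwa [← inv_div]

end LowerBound

theorem optimal_recovery_derivative_values_general
    {E : Type*} [NormedAddCommGroup E] [NormedSpace ℝ E] [Nontrivial E]
    (ω : ℝ → ℝ) (hω : IsModulus ω)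
    (a b : ℝ) (hab : a < b) (n : ℕ) (hn : 0 < n) :
    (∀ f f' : ℝ → E, W1HHolder ω a b f f' → ∀ u ∈ Set.Icc a b,
        ‖f' u - polyDerivMethod a b n (fun i : Fin (n + 1) => f (unifPt a b n (i : ℕ))) u‖ ≤
          ((n : ℝ) / (b - a)) * ∫ s in (0:ℝ)..((b - a) / (n : ℝ)), ω s) ∧
    ∀ Φ : (Fin (n + 1) → E) → ℝ → E, ∀ c : ℝ,
      (∀ f f' : ℝ → E, W1HHolder ω a b f f' → ∀ u ∈ Set.Icc a b,
        ‖f' u - Φ (fun i : Fin (n + 1) => f (unifPt a b n (i : ℕ))) u‖ ≤ c) →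
      ((n : ℝ) / (b - a)) * ∫ s in (0:ℝ)..((b - a) / (n : ℝ)), ω s ≤ c :=
  ⟨fun _ _ hf _ hu => norm_sub_polyDerivMethod_le hω hab hn hf hu,
    le_of_forall_W1HHolder_norm_sub_le hω hab hn⟩

/-- Optimal recovery of the derivative on `W¹H^ω([a,b],E)` from the values of the function at
the uniform knots: the optimal error equals `(n/(b−a)) ∫_0^{(b−a)/n} ω(u) du`; it is attained by
the derivative of the interpolating polygonal line. -/
theorem optimal_recovery_derivative_values
    {E : Type*} [NormedAddCommGroup E] [NormedSpace ℝ E] [CompleteSpace E] [Nontrivial E]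
    (ω : ℝ → ℝ) (hω : IsModulus ω)
    (a b : ℝ) (hab : a < b) (n : ℕ) (hn : 0 < n) :
    (∀ f f' : ℝ → E, W1HHolder ω a b f f' → ∀ u ∈ Set.Icc a b,
        ‖f' u - polyDerivMethod a b n (fun i : Fin (n + 1) => f (unifPt a b n (i : ℕ))) u‖ ≤
          ((n : ℝ) / (b - a)) * ∫ s in (0:ℝ)..((b - a) / (n : ℝ)), ω s) ∧
    ∀ Φ : (Fin (n + 1) → E) → ℝ → E, ∀ c : ℝ,
      (∀ f f' : ℝ → E, W1HHolder ω a b f f' → ∀ u ∈ Set.Icc a b,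
        ‖f' u - Φ (fun i : Fin (n + 1) => f (unifPt a b n (i : ℕ))) u‖ ≤ c) →
      ((n : ℝ) / (b - a)) * ∫ s in (0:ℝ)..((b - a) / (n : ℝ)), ω s ≤ c :=
  optimal_recovery_derivative_values_general ω hω a b hab n hn
end

section
/- Sharp estimate of the deviation of the derivative from a divided difference: Let ω be a modulus of continuity, E a real Banach space, and let f: [a,b] → E be differentiable with f′ ∈ H^ω([a,b],E). Let t ∈ [a,b] and h₁, h₂ ≥ 0 with h₁ + h₂ > 0 and [t − h₁, t + h₂] ⊆ [a,b]. Then, writing I(α) = ∫_0^α ω(u) du, one has ‖f′(t) − (f(t+h₂) − f(t−h₁))/(h₁+h₂)‖ ≤ (I(h₁) + I(h₂))/(h₁+h₂). -/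
open MeasureTheory Set

/-! By the fundamental theorem of calculus, `f' t` minus the divided difference over
`[t - h₁, t + h₂]` is the mean of `f' t - f' s` over that interval, so its norm is at most the
mean of `ω |t - s|`; the substitution `u = |t - s|` on either side of `t` turns that integral into
`I(h₁) + I(h₂)`. -/

open Filter Topology

theorem HHolder.continuousOn {E : Type*} [NormedAddCommGroup E] {ω : ℝ → ℝ} (hω₀ : ω 0 = 0)
    (hωc : ContinuousWithinAt ω (Ici 0) 0) {a b : ℝ} {g : ℝ → E} (hg : HHolder ω a b g) :
    ContinuousOn g (Icc a b) := by
  intro x hx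
  have hdist : ContinuousWithinAt (fun s : ℝ => |s - x|) (Icc a b) x :=
    ((continuous_id.sub continuous_const).abs).continuousWithinAt
  have hbound : Tendsto (fun s => ω |s - x|) (𝓝[Icc a b] x) (𝓝 0) := by
    simpa [Function.comp_def, hω₀] using
      (hωc.comp_of_eq hdist (fun s _ => abs_nonneg (s - x)) (by simp)).tendsto
  refine tendsto_iff_norm_sub_tendsto_zero.2 (squeeze_zero_norm' ?_ hbound)
  filter_upwards [self_mem_nhdsWithin] with s hs
  simpa using hg x hx s hs

theorem norm_sub_slope_le_integral_div {E : Type*} [NormedAddCommGroup E] [NormedSpace ℝ E]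
    [CompleteSpace E] {f f' : ℝ → E} {B : ℝ → ℝ} {c d : ℝ} (v : E) (hcd : c < d)
    (hf : ∀ s ∈ Icc c d, HasDerivWithinAt f (f' s) (Icc c d) s)
    (hf' : IntervalIntegrable f' volume c d) (hB : IntervalIntegrable B volume c d)
    (hbound : ∀ s ∈ Icc c d, ‖v - f' s‖ ≤ B s) :
    ‖v - slope f c d‖ ≤ (∫ s in c..d, B s) / (d - c) := by
  have hftc : ∫ s in c..d, f' s = f d - f c :=
    intervalIntegral.integral_eq_sub_of_hasDerivAt_of_le hcd.le
      (fun s hs => (hf s hs).continuousWithinAt)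
      (fun s hs => (hf s (Ioo_subset_Icc_self hs)).hasDerivAt (Icc_mem_nhds hs.1 hs.2)) hf'
  have hlen : d - c ≠ 0 := sub_ne_zero.2 hcd.ne'
  have hmean : v - slope f c d = (d - c)⁻¹ • ∫ s in c..d, (v - f' s) := by
    rw [intervalIntegral.integral_sub intervalIntegrable_const hf', intervalIntegral.integral_const,
      hftc, slope_def_module, smul_sub (d - c)⁻¹ ((d - c) • v), smul_smul, inv_mul_cancel₀ hlen, one_smul]
  have hint : ‖∫ s in c..d, (v - f' s)‖ ≤ ∫ s in c..d, B s :=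
    intervalIntegral.norm_integral_le_of_norm_le hcd.le
      (ae_of_all _ fun s hs => hbound s (Ioc_subset_Icc_self hs)) hB
  rw [hmean, norm_smul, Real.norm_eq_abs, abs_of_pos (inv_pos.2 (sub_pos.2 hcd)), div_eq_inv_mul]
  exact mul_le_mul_of_nonneg_left hint (inv_nonneg.2 (sub_pos.2 hcd).le)

theorem integral_comp_abs_sub_eq_add {ω : ℝ → ℝ} (hω : ContinuousOn ω (Ici 0)) (t : ℝ)
    {h₁ h₂ : ℝ} (hh₁ : 0 ≤ h₁) (hh₂ : 0 ≤ h₂) :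
    ∫ s in (t - h₁)..(t + h₂), ω |t - s| = (∫ u in (0:ℝ)..h₁, ω u) + ∫ u in (0:ℝ)..h₂, ω u := by
  have hcont : Continuous fun u => ω |u| := hω.comp_continuous continuous_abs abs_nonneg
  have habs : ∀ {h : ℝ}, 0 ≤ h → ∫ u in (0:ℝ)..h, ω |u| = ∫ u in (0:ℝ)..h, ω u := fun hh =>
    intervalIntegral.integral_congr fun u hu => by
      rw [uIcc_of_le hh] at hu
      rw [abs_of_nonneg hu.1]
  calc ∫ s in (t - h₁)..(t + h₂), ω |t - s|
      = ∫ u in -h₂..h₁, ω |u| := by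
        rw [intervalIntegral.integral_comp_sub_left (fun u => ω |u|) t]
        ring_nf
    _ = (∫ u in -h₂..0, ω |u|) + ∫ u in (0:ℝ)..h₁, ω |u| :=
        (intervalIntegral.integral_add_adjacent_intervals
          (hcont.intervalIntegrable _ _) (hcont.intervalIntegrable _ _)).symm
    _ = (∫ u in (0:ℝ)..h₁, ω u) + ∫ u in (0:ℝ)..h₂, ω u := by
        rw [← habs hh₁, ← habs hh₂, add_comm]
        simpa using (intervalIntegral.integral_comp_neg (a := 0) (b := h₂) fun u => ω |u|).symm

theorem deriv_divided_difference_deviation_general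
    {E : Type*} [NormedAddCommGroup E] [NormedSpace ℝ E] [CompleteSpace E]
    (ω : ℝ → ℝ) (hω : IsModulus ω)
    (a b : ℝ) (f f' : ℝ → E)
    (hdiff : ∀ u ∈ Set.Icc a b, HasDerivWithinAt f (f' u) (Set.Icc a b) u)
    (hf' : HHolder ω a b f')
    (t h₁ h₂ : ℝ) (hh₁ : 0 ≤ h₁) (hh₂ : 0 ≤ h₂) (hpos : 0 < h₁ + h₂)
    (hleft : a ≤ t - h₁) (hright : t + h₂ ≤ b) :
    ‖f' t - (h₁ + h₂)⁻¹ • (f (t + h₂) - f (t - h₁))‖ ≤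
      ((∫ u in (0:ℝ)..h₁, ω u) + ∫ u in (0:ℝ)..h₂, ω u) / (h₁ + h₂) := by
  obtain ⟨hω₀, hωc, -, -⟩ := hω
  have hsub : Icc (t - h₁) (t + h₂) ⊆ Icc a b := Icc_subset_Icc hleft hright
  have hlt : t - h₁ < t + h₂ := by linarith
  have ht : t ∈ Icc a b := ⟨by linarith, by linarith⟩
  have hf'cont : ContinuousOn f' (Icc (t - h₁) (t + h₂)) :=
    (hf'.continuousOn hω₀ (hωc 0 self_mem_Ici)).mono hsub
  have hBcont : ContinuousOn (fun s => ω |t - s|) (Icc (t - h₁) (t + h₂)) :=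
    hωc.comp (continuous_const.sub continuous_id).abs.continuousOn fun s _ => abs_nonneg (t - s)
  have key := norm_sub_slope_le_integral_div (f' t) hlt
    (fun s hs => (hdiff s (hsub hs)).mono hsub) (hf'cont.intervalIntegrable_of_Icc hlt.le)
    (hBcont.intervalIntegrable_of_Icc hlt.le) fun s hs => hf' s (hsub hs) t ht
  rwa [slope_def_module, integral_comp_abs_sub_eq_add hωc t hh₁ hh₂,
    show t + h₂ - (t - h₁) = h₁ + h₂ by ring] at key

/-- Sharp estimate of the deviation of the derivative from a divided difference for functions
with derivative in `H^ω([a,b],E)`. -/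
theorem deriv_divided_difference_deviation
    {E : Type*} [NormedAddCommGroup E] [NormedSpace ℝ E] [CompleteSpace E]
    (ω : ℝ → ℝ) (hω : IsModulus ω)
    (a b : ℝ) (hab : a ≤ b) (f f' : ℝ → E)
    (hdiff : ∀ u ∈ Set.Icc a b, HasDerivWithinAt f (f' u) (Set.Icc a b) u)
    (hf' : HHolder ω a b f')
    (t h₁ h₂ : ℝ) (hh₁ : 0 ≤ h₁) (hh₂ : 0 ≤ h₂) (hpos : 0 < h₁ + h₂)
    (hleft : a ≤ t - h₁) (hright : t + h₂ ≤ b) :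
    ‖f' t - (h₁ + h₂)⁻¹ • (f (t + h₂) - f (t - h₁))‖ ≤
      ((∫ u in (0:ℝ)..h₁, ω u) + ∫ u in (0:ℝ)..h₂, ω u) / (h₁ + h₂) :=
  deriv_divided_difference_deviation_general ω hω a b f f' hdiff hf' t h₁ h₂ hh₁ hh₂ hpos hleft
    hright
end
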